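/- arXiv:1510.04377 — 7 statements merged into one kernel-verified Lean document; each statement's English description precedes it below -/
import Mathlib

section
/- Let J = J_m(a) be an m×m Jordan block over a field F. A diagonal matrix T = diag(t₁,…,t_m) lies in the image of the linear map Y ↦ JY − YJ on M_m(F) if and only if t₁ + ⋯ + t_m = 0. -/
/-- The `m×m` Jordan block with eigenvalue `a`. -/
def jordanBlock (F : Type*) [Field F] (m : ℕ) (a : F) : Matrix (Fin m) (Fin m) F :=
  fun i j => if (i : ℕ) = (j : ℕ) then a else if (i : ℕ) + 1 = (j : ℕ) then 1 else 0

private lemma sum_ite_eq_cast {F : Type*} [AddCommMonoid F] {m : ℕ} (c : ℕ) (f : Fin m → F) :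
    ∑ k : Fin m, (if c = (k : ℕ) then f k else 0) = if h : c < m then f ⟨c, h⟩ else 0 := by
  by_cases h : c < m
  · rw [dif_pos h]
    rw [Finset.sum_eq_single_of_mem (⟨c, h⟩ : Fin m) (Finset.mem_univ _)]
    · simp
    · intro b _ hb
      rw [if_neg]
      intro hc
      exact hb (Fin.ext hc.symm)
  · rw [dif_neg h]
    apply Finset.sum_eq_zero
    intro k _
    rw [if_neg]
    intro hc
    exact h (hc ▸ k.isLt)

private lemma sum_ite_succ_eq_cast {F : Type*} [AddCommMonoid F] {m : ℕ} (c : ℕ)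
    (f : Fin m → F) :
    ∑ k : Fin m, (if (k : ℕ) + 1 = c then f k else 0)
      = if h : c - 1 < m ∧ 1 ≤ c then f ⟨c - 1, h.1⟩ else 0 := by
  by_cases hc : 1 ≤ c
  · have he : ∀ k : Fin m, (if (k : ℕ) + 1 = c then f k else 0)
        = (if c - 1 = (k : ℕ) then f k else 0) := by
      intro k
      apply if_congr _ rfl rfl
      omega
    rw [Finset.sum_congr rfl (fun k _ => he k), sum_ite_eq_cast]
    by_cases h : c - 1 < m
    · rw [dif_pos h, dif_pos ⟨h, hc⟩]
    · rw [dif_neg h, dif_neg (by tauto)]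
  · rw [dif_neg (by tauto)]
    apply Finset.sum_eq_zero
    intro k _
    rw [if_neg]
    omega

/-- A diagonal matrix `diag t` is in the image of `Y ↦ JY − YJ` (`J = J_m(a)` a
Jordan block) iff the sum of its diagonal entries vanishes. -/
theorem diagonal_mem_range_adJordan_iff {F : Type*} [Field F] {m : ℕ} (a : F)
    (t : Fin m → F) :
    (∃ Y : Matrix (Fin m) (Fin m) F,
        jordanBlock F m a * Y - Y * jordanBlock F m a = Matrix.diagonal t) ↔
      ∑ i, t i = 0 := by
  constructor
  · rintro ⟨Y, hY⟩
    have h := congrArg Matrix.trace hY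
    rw [Matrix.trace_sub, Matrix.trace_mul_comm, sub_self, Matrix.trace_diagonal] at h
    exact h.symm
  · intro hsum
    -- `T` : the diagonal extended by zero to `ℕ`; `S n` : partial sums.
    set T : ℕ → F := fun n => if h : n < m then t ⟨n, h⟩ else 0 with hT
    set S : ℕ → F := fun n => ∑ k ∈ Finset.range n, T k with hS
    have hSm : S m = 0 := by
      have : ∑ k ∈ Finset.range m, T k = ∑ i : Fin m, T i :=
        (Fin.sum_univ_eq_sum_range (fun k => T k) m).symm
      rw [hS]
      simp only [this]
      rw [← hsum]
      apply Finset.sum_congr rfl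
      intro i _
      simp [hT, i.isLt]
    have hSsucc : ∀ n, S (n + 1) = S n + T n := by
      intro n
      simp [hS, Finset.sum_range_succ]
    have hTt : ∀ i : Fin m, T (i : ℕ) = t i := by
      intro i
      simp [hT, i.isLt]
    refine ⟨fun i j => if (i : ℕ) = (j : ℕ) + 1 then S ((j : ℕ) + 1) else 0, ?_⟩
    funext i j
    set Y : Matrix (Fin m) (Fin m) F :=
      fun i j => if (i : ℕ) = (j : ℕ) + 1 then S ((j : ℕ) + 1) else 0 with hYdef
    show (jordanBlock F m a * Y - Y * jordanBlock F m a) i j = Matrix.diagonal t i j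
    have hJY : (jordanBlock F m a * Y) i j
        = a * Y i j + (if h : (i : ℕ) + 1 < m then Y ⟨(i : ℕ) + 1, h⟩ j else 0) := by
      rw [Matrix.mul_apply]
      have he : ∀ k : Fin m, jordanBlock F m a i k * Y k j
          = (if (i : ℕ) = (k : ℕ) then a * Y k j else 0)
            + (if (i : ℕ) + 1 = (k : ℕ) then Y k j else 0) := by
        intro k
        unfold jordanBlock
        split_ifs with h1 h2 h2 <;> first | omega | ring
      rw [Finset.sum_congr rfl (fun k _ => he k), Finset.sum_add_distrib,
        sum_ite_eq_cast, sum_ite_eq_cast, dif_pos i.isLt]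
    have hYJ : (Y * jordanBlock F m a) i j
        = a * Y i j + (if h : (j : ℕ) - 1 < m ∧ 1 ≤ (j : ℕ)
            then Y i ⟨(j : ℕ) - 1, h.1⟩ else 0) := by
      rw [Matrix.mul_apply]
      have he : ∀ k : Fin m, Y i k * jordanBlock F m a k j
          = (if (j : ℕ) = (k : ℕ) then a * Y i k else 0)
            + (if (k : ℕ) + 1 = (j : ℕ) then Y i k else 0) := by
        intro k
        unfold jordanBlock
        split_ifs with h1 h2 h2 h3 h3 <;> first | omega | ring
      rw [Finset.sum_congr rfl (fun k _ => he k), Finset.sum_add_distrib,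
        sum_ite_eq_cast, sum_ite_succ_eq_cast, dif_pos j.isLt]
    rw [Matrix.sub_apply, hJY, hYJ]
    have hdiag : Matrix.diagonal t i j = if (i : ℕ) = (j : ℕ) then t i else 0 := by
      rw [Matrix.diagonal_apply]
      apply if_congr _ rfl rfl
      exact Fin.ext_iff
    rw [hdiag]
    have hring : ∀ A B : F, (a * Y i j + A) - (a * Y i j + B) = A - B := by
      intro A B; ring
    rw [hring]
    -- now a pure case bash
    by_cases hij : (i : ℕ) = (j : ℕ)
    · rw [if_pos hij]
      by_cases h1 : (i : ℕ) + 1 < m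
      · rw [dif_pos h1]
        have hY1 : Y ⟨(i : ℕ) + 1, h1⟩ j = S ((j : ℕ) + 1) := by
          simp [hYdef, hij]
        by_cases h2 : 1 ≤ (j : ℕ)
        · rw [dif_pos ⟨by omega, h2⟩]
          have hY2 : Y i ⟨(j : ℕ) - 1, by omega⟩ = S (j : ℕ) := by
            have : ((j : ℕ) - 1) + 1 = (j : ℕ) := by omega
            simp only [hYdef, this, hij, if_pos]
          rw [hY1, hY2]
          have hti : t i = t j := by rw [Fin.ext hij]
          rw [hti]
          linear_combination hSsucc (j : ℕ) + hTt j
        · rw [dif_neg (by omega), hY1]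
          have hj0 : (j : ℕ) = 0 := by omega
          have hti : t i = t j := by rw [Fin.ext hij]
          rw [hti]
          have hS0 : S (j : ℕ) = 0 := by rw [hj0]; simp [hS]
          linear_combination hSsucc (j : ℕ) + hS0 + hTt j
      · rw [dif_neg h1]
        have hjm : (j : ℕ) + 1 = m := by omega
        by_cases h2 : 1 ≤ (j : ℕ)
        · rw [dif_pos ⟨by omega, h2⟩]
          have hY2 : Y i ⟨(j : ℕ) - 1, by omega⟩ = S (j : ℕ) := by
            have : ((j : ℕ) - 1) + 1 = (j : ℕ) := by omega
            simp only [hYdef, this, hij, if_pos]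
          rw [hY2]
          have hti : t i = t j := by rw [Fin.ext hij]
          rw [hti]
          have h1' : S ((j : ℕ) + 1) = 0 := by rw [hjm]; exact hSm
          linear_combination hSsucc (j : ℕ) - h1' + hTt j
        · rw [dif_neg (by omega)]
          have hj0 : (j : ℕ) = 0 := by omega
          have hti : t i = t j := by rw [Fin.ext hij]
          rw [hti]
          have h1' : S ((j : ℕ) + 1) = 0 := by rw [hjm]; exact hSm
          have hS0 : S (j : ℕ) = 0 := by rw [hj0]; simp [hS]
          linear_combination hTt j + hSsucc (j : ℕ) - h1' + hS0
    · rw [if_neg hij]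
      have e1 : (if h : (i : ℕ) + 1 < m then Y ⟨(i : ℕ) + 1, h⟩ j else 0) = 0 := by
        split
        · simp only [hYdef]
          rw [if_neg (by omega)]
        · rfl
      have e2 : (if h : (j : ℕ) - 1 < m ∧ 1 ≤ (j : ℕ)
          then Y i ⟨(j : ℕ) - 1, h.1⟩ else 0) = 0 := by
        split
        · next h =>
          simp only [hYdef]
          rw [if_neg (by omega)]
        · rfl
      rw [e1, e2]
      ring
end

section
/- Let G be a finite group, N ⊴ G with G/N abelian, ψ : N → ℂˣ a G-invariant homomorphism with non-degenerate commutator pairing D_ψ on G/N. Then the dimension of the unique irreducible representation of G lying over ψ equals the square root of [G : N]; in particular [G : N] is a perfect square. -/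
/-!
Since `ψ` is `G`-invariant, the simultaneous `ψ`-eigenspace of `N` is a subrepresentation, hence
all of the irreducible `V`: `N` acts by the scalar `ψ`. For `g ∉ N` non-degeneracy gives `y`
with `ψ [g, y] ≠ 1`, and `χ g = χ ([g, y] · y g y⁻¹) = ψ [g, y] χ g` forces `χ g = 0`. So `χ` is
supported on `N`, where `|χ|² = (dim V)²`, and `⟨χ, χ⟩ = 1` reads `|N| (dim V)² = |G|`.
-/

open Module

namespace Representation

variable {k G V : Type*} [Field k] [Group G] [AddCommGroup V] [Module k V]
  (ρ : Representation k G V)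

theorem isIrreducible_of_forall_invariant_submodule [Nontrivial V]
    (h : ∀ U : Submodule k V, (∀ (g : G) (v : V), v ∈ U → ρ g v ∈ U) → U = ⊥ ∨ U = ⊤) :
    IsIrreducible ρ where
  exists_pair_ne := ⟨⊥, ⊤, fun h => bot_ne_top (congrArg Subrepresentation.toSubmodule h)⟩
  eq_bot_or_eq_top W := (h W.toSubmodule fun g _ hv => W.apply_mem_toSubmodule g hv).imp
    (fun hW => Subrepresentation.ext hW) (fun hW => Subrepresentation.ext hW)

section CharacterOfSubgroup

variable (N : Subgroup G) (ψ : N →* kˣ)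

def eigenspaceOfChar : Submodule k V :=
  ⨅ n : N, Module.End.eigenspace (ρ n) (ψ n)

variable {ρ N ψ}

theorem mem_eigenspaceOfChar {v : V} :
    v ∈ ρ.eigenspaceOfChar N ψ ↔ ∀ n : N, ρ n v = (ψ n : k) • v := by
  simp only [eigenspaceOfChar, Submodule.mem_iInf, Module.End.mem_eigenspace_iff]

theorem eigenspaceOfChar_eq_top_iff :
    ρ.eigenspaceOfChar N ψ = ⊤ ↔ ∀ n : N, ρ n = (ψ n : k) • 1 := by
  simp only [Submodule.eq_top_iff', mem_eigenspaceOfChar, LinearMap.ext_iff]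
  exact forall_comm

theorem apply_mem_eigenspaceOfChar [N.Normal]
    (hψ : ∀ (g n : G) (hn : n ∈ N) (hg : g * n * g⁻¹ ∈ N), ψ ⟨g * n * g⁻¹, hg⟩ = ψ ⟨n, hn⟩)
    (g : G) {v : V} (hv : v ∈ ρ.eigenspaceOfChar N ψ) : ρ g v ∈ ρ.eigenspaceOfChar N ψ := by
  rw [mem_eigenspaceOfChar] at hv ⊢
  rintro ⟨n, hn⟩
  have hconj : g⁻¹ * n * g ∈ N := by simpa using ‹N.Normal›.conj_mem n hn g⁻¹
  have hψconj : ψ ⟨g⁻¹ * n * g, hconj⟩ = ψ ⟨n, hn⟩ := by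
    simpa using hψ g⁻¹ n hn (by simpa using hconj)
  calc ρ n (ρ g v) = ρ g (ρ (g⁻¹ * n * g) v) := by
        rw [← Module.End.mul_apply, ← Module.End.mul_apply, ← map_mul, ← map_mul]; group
    _ = (ψ ⟨n, hn⟩ : k) • ρ g v := by rw [hv ⟨_, hconj⟩, map_smul, hψconj]

theorem eigenspaceOfChar_eq_top [IsIrreducible ρ] [N.Normal]
    (hψ : ∀ (g n : G) (hn : n ∈ N) (hg : g * n * g⁻¹ ∈ N), ψ ⟨g * n * g⁻¹, hg⟩ = ψ ⟨n, hn⟩)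
    (hne : ρ.eigenspaceOfChar N ψ ≠ ⊥) : ρ.eigenspaceOfChar N ψ = ⊤ := by
  let W : Subrepresentation ρ := ⟨_, fun g _ hv => apply_mem_eigenspaceOfChar hψ g hv⟩
  have hW : W ≠ ⊥ := fun hW => hne (congrArg Subrepresentation.toSubmodule hW)
  exact congrArg Subrepresentation.toSubmodule ((IsSimpleOrder.eq_bot_or_eq_top W).resolve_left hW)

end CharacterOfSubgroup

section Character

variable {ρ}

theorem char_mul_of_apply_eq_smul_one {n : G} {c : k} (hn : ρ n = c • 1) (g : G) :
    ρ.character (n * g) = c * ρ.character g := by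
  rw [character, map_mul, hn, smul_mul_assoc, one_mul, map_smul, smul_eq_mul, character]

theorem char_eq_zero_of_commutator_eq_smul_one {g y : G} {c : k}
    (hc : ρ (g * y * g⁻¹ * y⁻¹) = c • 1) (hc1 : c ≠ 1) : ρ.character g = 0 := by
  have hfix : ρ.character g = c * ρ.character g :=
    calc ρ.character g = ρ.character (g * y * g⁻¹ * y⁻¹ * (y * g * y⁻¹)) := by group
      _ = c * ρ.character g := by rw [char_mul_of_apply_eq_smul_one hc, char_conj]
  by_contra h
  exact hc1 ((mul_eq_right₀ h).mp hfix.symm)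

end Character

section Orthogonality

variable [FiniteDimensional k V] [IsAlgClosed k] [CharZero k] [Fintype G] {ρ}

theorem card_mul_finrank_sq_eq_card [IsIrreducible ρ] {N : Subgroup G} {ψ : N →* kˣ}
    (hN : ∀ n : N, ρ n = (ψ n : k) • 1) (hoff : ∀ g ∉ N, ρ.character g = 0) :
    Nat.card N * finrank k V ^ 2 = Nat.card G := by
  classical
  have hchar (n : N) : ρ.character n = ψ n * finrank k V := by
    simpa using char_mul_of_apply_eq_smul_one (hN n) 1
  have hterm (g : G) :
      ρ.character g * ρ.character g⁻¹ = if g ∈ N then (finrank k V : k) ^ 2 else 0 := by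
    split_ifs with hg
    · rw [hchar ⟨g, hg⟩, show g⁻¹ = ((⟨g, hg⟩⁻¹ : N) : G) from rfl, hchar, map_inv,
        mul_mul_mul_comm, Units.mul_inv, one_mul, sq]
    · rw [hoff g hg, zero_mul]
  have hsum : ∑ g : G, ρ.character g * ρ.character g⁻¹ = Nat.card N * (finrank k V : k) ^ 2 := by
    simp [hterm, Finset.sum_ite, Nat.card_eq_fintype_card, Fintype.card_subtype]
  have : Invertible (Nat.card G : k) := invertibleOfNonzero (by simp)
  have horth := char_orthonormal ρ ρ
  rw [if_pos ⟨Equiv.refl ρ⟩, hsum, inv_mul_eq_one₀ (by simp)] at horth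
  exact_mod_cast horth.symm

end Orthogonality

end Representation

/-- With `D_ψ` non-degenerate on `G/N`, any irreducible representation of `G`
lying over `ψ` has dimension `√[G:N]`; in particular `[G:N]` is a perfect square. -/
theorem dim_sq_eq_index_of_irreducible_over_character {G : Type} [Group G] [Fintype G]
    (N : Subgroup G) [N.Normal]
    (hcomm : ∀ x y : G, x * y * x⁻¹ * y⁻¹ ∈ N)
    (ψ : N →* ℂˣ)
    (hinv : ∀ (g n : G) (hn : n ∈ N) (hg : g * n * g⁻¹ ∈ N),
      ψ ⟨g * n * g⁻¹, hg⟩ = ψ ⟨n, hn⟩)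
    (hnd : ∀ x : G, (∀ y : G, ψ ⟨x * y * x⁻¹ * y⁻¹, hcomm x y⟩ = 1) → x ∈ N) :
    ∀ V : FDRep ℂ G, Nontrivial V →
      (∀ U : Submodule ℂ V, (∀ (g : G) (v : V), v ∈ U → V.ρ g v ∈ U) → U = ⊥ ∨ U = ⊤) →
      (∃ v : V, v ≠ 0 ∧ ∀ (n : G) (hn : n ∈ N),
        V.ρ n v = ((ψ ⟨n, hn⟩ : ℂˣ) : ℂ) • v) →
      (finrank ℂ V) ^ 2 = N.index ∧ IsSquare N.index := by
  intro V _ hirr ⟨v, hv0, hvψ⟩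
  have := Representation.isIrreducible_of_forall_invariant_submodule V.ρ hirr
  have hscalar : ∀ n : N, V.ρ n = (ψ n : ℂ) • 1 := by
    refine Representation.eigenspaceOfChar_eq_top_iff.mp
      (Representation.eigenspaceOfChar_eq_top hinv ((Submodule.ne_bot_iff _).mpr ?_))
    exact ⟨v, Representation.mem_eigenspaceOfChar.mpr fun n => hvψ n n.2, hv0⟩
  have hoff : ∀ g ∉ N, Representation.character V.ρ g = 0 := by
    intro g hg
    obtain ⟨y, hy⟩ : ∃ y, ψ ⟨g * y * g⁻¹ * y⁻¹, hcomm g y⟩ ≠ 1 := by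
      by_contra! h
      exact hg (hnd g h)
    exact Representation.char_eq_zero_of_commutator_eq_smul_one (hscalar ⟨_, hcomm g y⟩)
      (Units.val_eq_one.not.mpr hy)
  have hd : finrank ℂ V ^ 2 = N.index := Nat.eq_of_mul_eq_mul_left Nat.card_pos
    ((Representation.card_mul_finrank_sq_eq_card hscalar hoff).trans
      (Subgroup.card_mul_index N).symm)
  exact ⟨hd, finrank ℂ V, by rw [← hd, sq]⟩
end

section
/- Let F be a finite field of odd characteristic, V = W' ⊕ W a polarization of a symplectic F-space, and τ̂ a nontrivial additive character of F. The formulas (π(u,s)f)(w) = s·τ̂(2⁻¹⟨u₋,u₊⟩ + ⟨w,u₊⟩)·f(w+u₋), where u = u₋+u₊ with u₋ ∈ W', u₊ ∈ W, define a representation of the Heisenberg group H(V) on the space of complex-valued functions on W', in which the central element (0,s) acts by the scalar s. -/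
/-!
Write `u = a + b` with `a ∈ W'`, `b ∈ W`, and let `φ(u, w) = 2⁻¹ω(a, b) + ω(w, b)` be the phase of
`π(u, s)` at `w`. Composing `π(u, s)` with `π(v, t)` multiplies the phases, so `π` is multiplicative
exactly when `2⁻¹ω(u, v) + φ(u + v, w) = φ(u, w) + φ(v, w + a)`. Expanding both sides bilinearly,
the terms `ω(a, c)` and `ω(b, d)` vanish because `W'` and `W` are isotropic, the terms `ω(b, c)` and
`ω(c, b)` cancel because `ω` is alternating, and the two halves of `ω(a, d)` add up since `2 ≠ 0`.
-/

namespace LinearMap.IsAlt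

variable {F V : Type*} [Field F] [AddCommGroup V] [Module F V] {ω : V →ₗ[F] V →ₗ[F] F}

theorem heisenberg_cocycle (hω : ω.IsAlt) (h2 : (2 : F) ≠ 0) {a b c d : V}
    (hac : ω a c = 0) (hbd : ω b d = 0) (w : V) :
    2⁻¹ * ω (a + b) (c + d) + (2⁻¹ * ω (a + c) (b + d) + ω w (b + d)) =
      (2⁻¹ * ω a b + ω w b) + (2⁻¹ * ω c d + ω (w + a) d) := by
  have hcb : ω c b = -ω b c := (hω.neg b c).symm
  simp only [map_add, LinearMap.add_apply, hac, hbd, hcb]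
  field_simp
  ring

end LinearMap.IsAlt

noncomputable section Schrodinger

variable {F V : Type*} [Field F] [AddCommGroup V] [Module F V] {W' : Submodule F V}

def schrodingerPhase (ω : V →ₗ[F] V →ₗ[F] F) (pr : V →ₗ[F] W') (u : V) (w : W') : F :=
  2⁻¹ * ω (pr u) (u - pr u) + ω w (u - pr u)

theorem schrodingerPhase_add {ω : V →ₗ[F] V →ₗ[F] F} (hω : ω.IsAlt) (h2 : (2 : F) ≠ 0)
    (hW' : ∀ x ∈ W', ∀ y ∈ W', ω x y = 0) {W : Submodule F V}
    (hW : ∀ x ∈ W, ∀ y ∈ W, ω x y = 0) {pr : V →ₗ[F] W'} (hpr : ∀ u, u - pr u ∈ W)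
    (u v : V) (w : W') :
    2⁻¹ * ω u v + schrodingerPhase ω pr (u + v) w =
      schrodingerPhase ω pr u w + schrodingerPhase ω pr v (w + pr u) := by
  have hu : u = pr u + (u - pr u) := (add_sub_cancel _ _).symm
  have hv : v = pr v + (v - pr v) := (add_sub_cancel _ _).symm
  have hsub : u + v - ((pr u : V) + pr v) = (u - pr u) + (v - pr v) := by abel
  have key := hω.heisenberg_cocycle h2 (hW' _ (pr u).2 _ (pr v).2)
    (hW _ (hpr u) _ (hpr v)) (w : V)
  rw [← hu, ← hv, ← hsub] at key
  simpa only [schrodingerPhase, map_add, Submodule.coe_add] using key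

def heisenbergMul (τ : AddChar F Circle) (ω : V →ₗ[F] V →ₗ[F] F) (p q : V × Circle) :
    V × Circle :=
  (p.1 + q.1, p.2 * q.2 * τ (2⁻¹ * ω p.1 q.1))

def schrodingerAction (τ : AddChar F Circle) (ω : V →ₗ[F] V →ₗ[F] F) (pr : V →ₗ[F] W')
    (p : V × Circle) (f : W' → ℂ) (w : W') : ℂ :=
  p.2 * τ (schrodingerPhase ω pr p.1 w) * f (w + pr p.1)

variable {τ : AddChar F Circle} {ω : V →ₗ[F] V →ₗ[F] F} {pr : V →ₗ[F] W'}

theorem schrodingerAction_heisenbergMul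
    (hphase : ∀ u v w, 2⁻¹ * ω u v + schrodingerPhase ω pr (u + v) w =
      schrodingerPhase ω pr u w + schrodingerPhase ω pr v (w + pr u))
    (p q : V × Circle) (f : W' → ℂ) :
    schrodingerAction τ ω pr (heisenbergMul τ ω p q) f =
      schrodingerAction τ ω pr p (schrodingerAction τ ω pr q f) := by
  funext w
  have hτ : (τ (2⁻¹ * ω p.1 q.1) : ℂ) * τ (schrodingerPhase ω pr (p.1 + q.1) w) =
      τ (schrodingerPhase ω pr p.1 w) * τ (schrodingerPhase ω pr q.1 (w + pr p.1)) := by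
    rw [← Circle.coe_mul, ← Circle.coe_mul, ← AddChar.map_add_eq_mul, ← AddChar.map_add_eq_mul,
      hphase]
  simp only [schrodingerAction, heisenbergMul, map_add, Circle.coe_mul, ← add_assoc]
  linear_combination (p.2 : ℂ) * q.2 * f (w + pr p.1 + pr q.1) * hτ

theorem schrodingerAction_zero_fst (s : Circle) (f : W' → ℂ) (w : W') :
    schrodingerAction τ ω pr (0, s) f w = s * f w := by
  simp [schrodingerAction, schrodingerPhase]

end Schrodinger

theorem schrodinger_representation_general {F : Type*} [Field F]
    (hodd : ringChar F ≠ 2)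
    {V : Type*} [AddCommGroup V] [Module F V]
    (ω : V →ₗ[F] V →ₗ[F] F)
    (halt : ∀ v : V, ω v v = 0)
    (W' W : Submodule F V) (hc : IsCompl W' W)
    (hW' : ∀ x ∈ W', ∀ y ∈ W', ω x y = 0)
    (hW : ∀ x ∈ W, ∀ y ∈ W, ω x y = 0)
    (τ : AddChar F Circle) :
    let mulH : V × Circle → V × Circle → V × Circle :=
      fun p q => (p.1 + q.1, p.2 * q.2 * τ ((2 : F)⁻¹ * ω p.1 q.1))
    let pr : V →ₗ[F] W' := Submodule.linearProjOfIsCompl W' W hc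
    let ρ : V × Circle → (W' → ℂ) → (W' → ℂ) :=
      fun p f w => (p.2 : ℂ) *
        ((τ ((2 : F)⁻¹ * ω (pr p.1) (p.1 - pr p.1) + ω (w : V) (p.1 - pr p.1)) : Circle) : ℂ) *
        f (w + pr p.1)
    (∀ p q f, ρ (mulH p q) f = ρ p (ρ q f)) ∧
    (∀ (s : Circle) (f : W' → ℂ) (w : W'), ρ ((0 : V), s) f w = (s : ℂ) * f w) := by
  intro mulH pr ρ
  have hphase := schrodingerPhase_add halt (Ring.two_ne_zero hodd) hW' hW
    (pr := pr) (Submodule.sub_projection_mem hc)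
  exact ⟨schrodingerAction_heisenbergMul (τ := τ) hphase, schrodingerAction_zero_fst⟩

/-- Schrödinger representation: with a polarization `V = W' ⊕ W` of a symplectic
space, the formula `(π(u,s)f)(w) = s·τ̂(2⁻¹⟨u₋,u₊⟩+⟨w,u₊⟩)·f(w+u₋)` defines a
representation of the Heisenberg group `H(V)` on functions on `W'`, in which the
central element `(0,s)` acts by the scalar `s`. -/
theorem schrodinger_representation {F : Type*} [Field F] [Fintype F]
    (hodd : ringChar F ≠ 2)
    {V : Type*} [AddCommGroup V] [Module F V]
    (ω : V →ₗ[F] V →ₗ[F] F)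
    (halt : ∀ v : V, ω v v = 0)
    (W' W : Submodule F V) (hc : IsCompl W' W)
    (hW' : ∀ x ∈ W', ∀ y ∈ W', ω x y = 0)
    (hW : ∀ x ∈ W, ∀ y ∈ W, ω x y = 0)
    (τ : AddChar F Circle) (hτ : ∃ a : F, τ a ≠ 1) :
    let mulH : V × Circle → V × Circle → V × Circle :=
      fun p q => (p.1 + q.1, p.2 * q.2 * τ ((2 : F)⁻¹ * ω p.1 q.1))
    let pr : V →ₗ[F] W' := Submodule.linearProjOfIsCompl W' W hc
    let ρ : V × Circle → (W' → ℂ) → (W' → ℂ) :=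
      fun p f w => (p.2 : ℂ) *
        ((τ ((2 : F)⁻¹ * ω (pr p.1) (p.1 - pr p.1) + ω (w : V) (p.1 - pr p.1)) : Circle) : ℂ) *
        f (w + pr p.1)
    (∀ p q f, ρ (mulH p q) f = ρ p (ρ q f)) ∧
    (∀ (s : Circle) (f : W' → ℂ) (w : W'), ρ ((0 : V), s) f w = (s : ℂ) * f w) :=
  schrodinger_representation_general hodd ω halt W' W hc hW' hW τ
end

section
/- Let F be a field of characteristic 0 or of characteristic > n, let N ∈ Mₙ(F) be the nilpotent Jordan block J_n(0), and define exp(S) = Σ_{k=0}^{n−1} S^k/k! for upper-triangular nilpotent S. Then the map (r, s₁,…,s_{n−1}) ↦ r·exp(Σ_{k=1}^{n−1} s_k N^k) is a group isomorphism from Fˣ × F^{n−1} (with componentwise multiplication on Fˣ and addition on F^{n−1}) onto the unit group F[J_n(a)]ˣ of the algebra generated by a Jordan block J_n(a). -/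
/-- Truncated exponential `exp S = Σ_{k<n} S^k/k!` for `n×n` matrices. -/
def texp {F : Type*} [Field F] {n : ℕ} (S : Matrix (Fin n) (Fin n) F) :
    Matrix (Fin n) (Fin n) F :=
  ∑ k ∈ Finset.range n, ((Nat.factorial k : F))⁻¹ • S ^ k

/-!
`F[J_n(a)] = F[N]` is a local algebra: every element is `c + z` with `z` in the ideal `m = (N)`,
`m ^ n = 0`, and it is a unit exactly when `c ≠ 0`. Because `k!` is invertible for `k < n`, the
binomial theorem makes the truncated exponential a homomorphism `(m, +) → (1 + m, *)`: every term
of total degree `≥ n` vanishes. Since `exp z = 1 + z` modulo `z ^ 2`, it is injective on `m` and,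
by successive approximation along the powers of `m`, onto `1 + m`. Finally `N, …, N ^ (n - 1)`
are linearly independent and span `m`, which gives the coordinates `s`.
-/

open Finset Polynomial
open Finset.HasAntidiagonal (mem_antidiagonal)
open scoped Nat

theorem Finset.sum_range_sum_antidiagonal_eq_sum_range_sum_range {M : Type*} [AddCommMonoid M]
    {n : ℕ} (f : ℕ → ℕ → M) (hf : ∀ i j, n ≤ i + j → f i j = 0) :
    ∑ k ∈ range n, ∑ p ∈ antidiagonal k, f p.1 p.2 = ∑ i ∈ range n, ∑ j ∈ range n, f i j := by
  calc ∑ k ∈ range n, ∑ p ∈ antidiagonal k, f p.1 p.2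
      = ∑ k ∈ range n, ∑ i ∈ range (k + 1), f i (k - i) := by
        simp_rw [Nat.sum_antidiagonal_eq_sum_range_succ f]
    _ = ∑ i ∈ range n, ∑ k ∈ Ico i n, f i (k - i) :=
        sum_comm' fun k i => by simp only [mem_range, mem_Ico]; omega
    _ = ∑ i ∈ range n, ∑ j ∈ range (n - i), f i j :=
        sum_congr rfl fun i _ => by simp [sum_Ico_eq_sum_range]
    _ = ∑ i ∈ range n, ∑ j ∈ range n, f i j :=
        sum_congr rfl fun i _ => sum_subset (range_subset_range.2 (Nat.sub_le n i))
          fun j _ hj => hf i j (by simp only [mem_range] at hj; omega)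

theorem natCast_factorial_ne_zero {F : Type*} [Field F] {n : ℕ}
    (hchar : ∀ k : ℕ, 0 < k → k ≤ n → (k : F) ≠ 0) {k : ℕ} (hk : k ≤ n) : (k ! : F) ≠ 0 := by
  induction k with
  | zero => simp
  | succ k ih =>
    rw [Nat.factorial_succ, Nat.cast_mul]
    exact mul_ne_zero (hchar _ k.succ_pos hk) (ih (by omega))

theorem inv_factorial_add_mul_choose {F : Type*} [Field F] {i j : ℕ}
    (h : ((i + j)! : F) ≠ 0) :
    ((i + j)! : F)⁻¹ * (i + j).choose i = (i ! : F)⁻¹ * (j ! : F)⁻¹ := by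
  have hchoose : ((i + j).choose i : F) * i ! * j ! = (i + j)! := by
    rw [Nat.choose_symm_add]
    exact_mod_cast congrArg (Nat.cast : ℕ → F) (Nat.add_choose_mul_factorial_mul_factorial i j)
  rw [← hchoose] at h ⊢
  simp only [ne_eq, mul_eq_zero, not_or] at h
  field_simp [h.1.1, h.1.2, h.2]

def truncExp (F : Type*) {A : Type*} [Field F] [Ring A] [Algebra F A] (n : ℕ) (x : A) : A :=
  ∑ k ∈ range n, ((k ! : F))⁻¹ • x ^ k

section TruncExp

variable {F A : Type*} [Field F] {n : ℕ}

theorem truncExp_zero [Ring A] [Algebra F A] (hn : n ≠ 0) : truncExp F n (0 : A) = 1 := by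
  rw [truncExp, ← Nat.succ_pred_eq_of_ne_zero hn, sum_range_succ']
  simp

theorem truncExp_eq_one_add_add_sq_mul [Ring A] [Algebra F A] {x : A} (hx : x ^ n = 0) :
    truncExp F n x = 1 + x + x ^ 2 * ∑ k ∈ range n, (((k + 2) ! : F))⁻¹ • x ^ k := by
  have hx' : x ^ (n + 1) = 0 := by rw [pow_succ, hx, zero_mul]
  calc truncExp F n x = ∑ k ∈ range (n + 2), ((k ! : F))⁻¹ • x ^ k := by
        simp [truncExp, sum_range_succ _ (n + 1), sum_range_succ _ n, hx, hx']
    _ = _ := by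
        have hpow (k : ℕ) : x ^ (k + 1 + 1) = x ^ 2 * x ^ k := by rw [← pow_add, add_comm 2 k]
        rw [sum_range_succ', sum_range_succ', mul_sum]
        simp only [zero_add, Nat.factorial_zero, Nat.factorial_one, Nat.cast_one, inv_one, pow_zero,
          pow_one, one_smul]
        rw [sum_congr rfl fun k _ => by rw [hpow, ← mul_smul_comm]]
        abel

theorem map_truncExp {B : Type*} [Ring A] [Algebra F A] [Ring B] [Algebra F B] (f : A →ₐ[F] B)
    (x : A) : f (truncExp F n x) = truncExp F n (f x) := by
  simp [truncExp]

variable [CommRing A] [Algebra F A] {I : Ideal A}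

theorem pow_mul_pow_eq_zero_of_pow_eq_bot (hI : I ^ n = ⊥) {x y : A} (hx : x ∈ I) (hy : y ∈ I)
    {i j : ℕ} (hij : n ≤ i + j) : x ^ i * y ^ j = 0 := by
  have : x ^ i * y ^ j ∈ I ^ n :=
    Ideal.pow_le_pow_right hij (pow_add I i j ▸ Ideal.mul_mem_mul (Ideal.pow_mem_pow hx i)
      (Ideal.pow_mem_pow hy j))
  rwa [hI, Ideal.mem_bot] at this

theorem truncExp_add (hfac : ∀ k < n, (k ! : F) ≠ 0) (hI : I ^ n = ⊥) {x y : A} (hx : x ∈ I)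
    (hy : y ∈ I) : truncExp F n (x + y) = truncExp F n x * truncExp F n y := by
  calc truncExp F n (x + y)
      = ∑ k ∈ range n, ∑ p ∈ antidiagonal k,
          ((p.1 ! : F)⁻¹ * (p.2 ! : F)⁻¹) • (x ^ p.1 * y ^ p.2) := by
        refine sum_congr rfl fun k hk => ?_
        rw [(Commute.all x y).add_pow', smul_sum]
        refine sum_congr rfl fun ⟨i, j⟩ hij => ?_
        obtain rfl : i + j = k := mem_antidiagonal.1 hij
        rw [← Nat.cast_smul_eq_nsmul F, smul_smul,
          inv_factorial_add_mul_choose (hfac _ (mem_range.1 hk))]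
    _ = ∑ i ∈ range n, ∑ j ∈ range n, ((i ! : F)⁻¹ * (j ! : F)⁻¹) • (x ^ i * y ^ j) :=
        sum_range_sum_antidiagonal_eq_sum_range_sum_range
          (fun i j => ((i ! : F)⁻¹ * (j ! : F)⁻¹) • (x ^ i * y ^ j)) fun i j hij => by
          rw [pow_mul_pow_eq_zero_of_pow_eq_bot hI hx hy hij, smul_zero]
    _ = truncExp F n x * truncExp F n y := by
        simp only [truncExp, sum_mul_sum, smul_mul_smul_comm]

theorem pow_eq_zero_of_mem_of_pow_eq_bot (hI : I ^ n = ⊥) {x : A} (hx : x ∈ I) : x ^ n = 0 := by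
  simpa [hI] using Ideal.pow_mem_pow hx n

theorem truncExp_mul_truncExp_neg (hn : n ≠ 0) (hfac : ∀ k < n, (k ! : F) ≠ 0) (hI : I ^ n = ⊥)
    {x : A} (hx : x ∈ I) : truncExp F n x * truncExp F n (-x) = 1 := by
  rw [← truncExp_add hfac hI hx (I.neg_mem hx), add_neg_cancel, truncExp_zero hn]

theorem truncExp_sub_one_sub_mem (hI : I ^ n = ⊥) {m : ℕ} (hm : m ≠ 0) {x : A} (hx : x ∈ I ^ m) :
    truncExp F n x - 1 - x ∈ I ^ (2 * m) := by
  have hxn := pow_eq_zero_of_mem_of_pow_eq_bot hI (Ideal.pow_le_self hm hx)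
  rw [truncExp_eq_one_add_add_sq_mul hxn, add_assoc, add_sub_cancel_left, add_sub_cancel_left]
  exact Ideal.mul_mem_right _ _ (by simpa [← pow_mul, mul_comm] using Ideal.pow_mem_pow hx 2)

theorem eq_zero_of_truncExp_eq_one (hI : I ^ n = ⊥) {x : A} (hx : x ∈ I)
    (h : truncExp F n x = 1) : x = 0 := by
  have hmem (m : ℕ) : x ∈ I ^ (m + 1) := by
    induction m with
    | zero => simpa using hx
    | succ m ih =>
      have := truncExp_sub_one_sub_mem (F := F) hI m.succ_ne_zero ih
      rw [h, sub_self, zero_sub, neg_mem_iff] at this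
      exact Ideal.pow_le_pow_right (by omega) this
  simpa [hI] using Ideal.pow_le_pow_right n.le_succ (hmem n)

theorem truncExp_injOn (hn : n ≠ 0) (hfac : ∀ k < n, (k ! : F) ≠ 0) (hI : I ^ n = ⊥) :
    Set.InjOn (truncExp F n) (I : Set A) := by
  intro x hx y hy hxy
  have h : truncExp F n (x - y) = 1 :=
    calc truncExp F n (x - y)
        = truncExp F n (x - y) * (truncExp F n y * truncExp F n (-y)) := by
          rw [truncExp_mul_truncExp_neg hn hfac hI hy, mul_one]
      _ = truncExp F n x * truncExp F n (-y) := by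
          rw [← mul_assoc, ← truncExp_add hfac hI (I.sub_mem hx hy) hy, sub_add_cancel]
      _ = 1 := by rw [hxy, truncExp_mul_truncExp_neg hn hfac hI hy]
  exact sub_eq_zero.1 (eq_zero_of_truncExp_eq_one hI (I.sub_mem hx hy) h)

theorem exists_truncExp_eq_one_add (hn : n ≠ 0) (hfac : ∀ k < n, (k ! : F) ≠ 0) (hI : I ^ n = ⊥)
    {z : A} (hz : z ∈ I) : ∃ x ∈ I, truncExp F n x = 1 + z := by
  suffices ∀ d m, n ≤ m + 1 + d → ∀ z ∈ I ^ (m + 1), ∃ x ∈ I, truncExp F n x = 1 + z from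
    this n 0 (by omega) z (by simpa using hz)
  intro d
  induction d with
  | zero =>
    intro m hm z hz
    obtain rfl : z = 0 := by simpa [hI] using Ideal.pow_le_pow_right hm hz
    exact ⟨0, I.zero_mem, by rw [truncExp_zero hn, add_zero]⟩
  | succ d ih =>
    intro m hm z hz
    have hzI : z ∈ I := Ideal.pow_le_self m.succ_ne_zero hz
    -- `(1 + z) exp (-z)` is one power of `I` closer to `1` than `1 + z`
    have hcloser : (1 + z) * truncExp F n (-z) - 1 ∈ I ^ (m + 1 + 1) := by
      have htail := truncExp_sub_one_sub_mem (F := F) hI m.succ_ne_zero ((I ^ (m + 1)).neg_mem hz)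
      have hsq : z ^ 2 ∈ I ^ (2 * (m + 1)) := by
        simpa [← pow_mul, mul_comm] using Ideal.pow_mem_pow hz 2
      rw [show (1 + z) * truncExp F n (-z) - 1 = (1 + z) * (truncExp F n (-z) - 1 - -z) - z ^ 2 by
        ring]
      exact Ideal.pow_le_pow_right (by omega) ((I ^ (2 * (m + 1))).sub_mem
        (Ideal.mul_mem_left _ _ htail) hsq)
    obtain ⟨x, hxI, hx⟩ := ih (m + 1) (by omega) _ hcloser
    refine ⟨x + z, I.add_mem hxI hzI, ?_⟩
    rw [truncExp_add hfac hI hxI hzI, hx, add_sub_cancel, mul_assoc, mul_comm (truncExp F n (-z)),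
      truncExp_mul_truncExp_neg hn hfac hI hzI, mul_one]

theorem algebraMap_mem_iff_of_pow_eq_bot [Nontrivial A] (hI : I ^ n = ⊥) {c : F} :
    algebraMap F A c ∈ I ↔ c = 0 := by
  refine ⟨fun h => by_contra fun hc => ?_, fun h => by simp [h]⟩
  rw [Ideal.eq_top_of_isUnit_mem I h ((IsUnit.mk0 c hc).map _), Ideal.top_pow] at hI
  exact top_ne_bot hI

theorem truncExp_sub_one_mem (hI : I ^ n = ⊥) {x : A} (hx : x ∈ I) : truncExp F n x - 1 ∈ I := by
  have := truncExp_sub_one_sub_mem (F := F) hI one_ne_zero (by simpa using hx)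
  simpa using I.add_mem (Ideal.pow_le_self two_ne_zero this) hx

theorem isUnit_smul_truncExp (hn : n ≠ 0) (hfac : ∀ k < n, (k ! : F) ≠ 0) (hI : I ^ n = ⊥)
    {r : F} (hr : r ≠ 0) {x : A} (hx : x ∈ I) : IsUnit (r • truncExp F n x) :=
  IsUnit.of_mul_eq_one (r⁻¹ • truncExp F n (-x)) <| by
    rw [smul_mul_smul_comm, mul_inv_cancel₀ hr, truncExp_mul_truncExp_neg hn hfac hI hx, one_smul]

theorem eq_and_eq_of_smul_truncExp_eq [Nontrivial A] (hn : n ≠ 0) (hfac : ∀ k < n, (k ! : F) ≠ 0)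
    (hI : I ^ n = ⊥) {r r' : F} (hr : r ≠ 0) {x x' : A} (hx : x ∈ I) (hx' : x' ∈ I)
    (h : r • truncExp F n x = r' • truncExp F n x') : r = r' ∧ x = x' := by
  have hrr' : algebraMap F A (r - r') ∈ I := by
    rw [show algebraMap F A (r - r') = r' • (truncExp F n x' - 1) - r • (truncExp F n x - 1) by
      simp only [smul_sub, h, map_sub, Algebra.algebraMap_eq_smul_one]; abel]
    exact I.sub_mem (I.smul_of_tower_mem r' (truncExp_sub_one_mem hI hx'))
      (I.smul_of_tower_mem r (truncExp_sub_one_mem hI hx))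
  obtain rfl := sub_eq_zero.1 ((algebraMap_mem_iff_of_pow_eq_bot hI).1 hrr')
  exact ⟨rfl, truncExp_injOn hn hfac hI hx hx' (smul_right_injective A hr h)⟩

theorem exists_smul_truncExp_eq (hn : n ≠ 0) (hfac : ∀ k < n, (k ! : F) ≠ 0) (hI : I ^ n = ⊥)
    {c : F} (hc : c ≠ 0) {z : A} (hz : z ∈ I) :
    ∃ x ∈ I, c • truncExp F n x = algebraMap F A c + z := by
  obtain ⟨x, hx, hxz⟩ := exists_truncExp_eq_one_add hn hfac hI (I.smul_of_tower_mem c⁻¹ hz)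
  refine ⟨x, hx, ?_⟩
  rw [hxz, smul_add, smul_smul, mul_inv_cancel₀ hc, one_smul, Algebra.algebraMap_eq_smul_one]

end TruncExp

theorem exists_eq_sum_range_pow_of_mem_adjoin {F A : Type*} [Field F] [Ring A] [Algebra F A]
    {n : ℕ} {x y : A} (hx : x ^ n = 0) (hy : y ∈ Algebra.adjoin F {x}) :
    ∃ c : ℕ → F, y = ∑ k ∈ range n, c k • x ^ k := by
  rw [Algebra.adjoin_singleton_eq_range_aeval] at hy
  obtain ⟨p, rfl⟩ := (AlgHom.mem_range _).1 hy
  refine ⟨p.coeff, ?_⟩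
  rw [aeval_eq_sum_range' (lt_max_of_lt_left (p.natDegree.lt_succ_self)) (n := max _ n)]
  refine (sum_subset (range_subset_range.2 (le_max_right _ _)) fun i _ hi => ?_).symm
  rw [pow_eq_zero_of_le (by simpa using hi) hx, smul_zero]

section JordanBlock

variable {F : Type*} [Field F] {n : ℕ}

theorem jordanBlock_zero_apply (i j : Fin n) :
    jordanBlock F n 0 i j = if (i : ℕ) + 1 = j then 1 else 0 := by
  unfold jordanBlock
  split_ifs <;> first | rfl | omega

theorem jordanBlock_zero_pow_apply (k : ℕ) (i j : Fin n) :
    (jordanBlock F n 0 ^ k) i j = if (i : ℕ) + k = j then 1 else 0 := by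
  induction k generalizing j with
  | zero => simp [Matrix.one_apply, Fin.ext_iff]
  | succ k ih =>
    rw [pow_succ, Matrix.mul_apply]
    by_cases hj : (j : ℕ) = 0
    · refine (sum_eq_zero fun l _ => ?_).trans (if_neg (by omega)).symm
      rw [jordanBlock_zero_apply, if_neg (by omega), mul_zero]
    · rw [sum_eq_single ⟨j - 1, by omega⟩ (fun l _ hl => ?_) (by simp), ih,
        jordanBlock_zero_apply]
      · simp only
        split_ifs <;> first | omega | simp
      · rw [jordanBlock_zero_apply, if_neg (fun h => hl (Fin.ext (by simp only; omega))), mul_zero]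

theorem jordanBlock_zero_pow_eq_zero {k : ℕ} (hk : n ≤ k) : jordanBlock F n 0 ^ k = 0 := by
  ext i j
  rw [jordanBlock_zero_pow_apply, if_neg (by omega), Matrix.zero_apply]

theorem jordanBlock_eq_algebraMap_add (a : F) :
    jordanBlock F n a = algebraMap F _ a + jordanBlock F n 0 := by
  ext i j
  rw [Matrix.add_apply, Matrix.algebraMap_matrix_apply, jordanBlock_zero_apply, jordanBlock]
  simp only [Fin.ext_iff]
  split_ifs <;> first | omega | simp

theorem Algebra.adjoin_algebraMap_add_singleton {R A : Type*} [CommRing R] [Ring A] [Algebra R A]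
    (r : R) (x : A) : adjoin R {algebraMap R A r + x} = adjoin R {x} := by
  apply le_antisymm <;> rw [adjoin_le_iff, Set.singleton_subset_iff]
  · exact add_mem (algebraMap_mem _ r) (self_mem_adjoin_singleton R x)
  · simpa using sub_mem (self_mem_adjoin_singleton R (algebraMap R A r + x)) (algebraMap_mem _ r)

theorem adjoin_jordanBlock (a : F) :
    Algebra.adjoin F {jordanBlock F n a} = Algebra.adjoin F {jordanBlock F n 0} := by
  rw [jordanBlock_eq_algebraMap_add, Algebra.adjoin_algebraMap_add_singleton]

theorem linearIndependent_jordanBlock_zero_pow :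
    LinearIndependent F fun k : Fin (n - 1) => jordanBlock F n 0 ^ ((k : ℕ) + 1) := by
  refine Fintype.linearIndependent_iff.2 fun g hg k => ?_
  have hk := k.2
  have := congrFun (congrFun hg ⟨0, by omega⟩) ⟨k + 1, by omega⟩
  rw [Matrix.sum_apply, sum_eq_single k (fun l _ hl => ?_) (by simp)] at this
  · simpa [jordanBlock_zero_pow_apply] using this
  · rw [Matrix.smul_apply, jordanBlock_zero_pow_apply,
      if_neg fun h => hl (Fin.ext (by simp at h; omega)), smul_zero]

end JordanBlock

section JordanAlgebra

variable (F : Type*) [Field F] (n : ℕ)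

abbrev jordanAlgebra : Subalgebra F (Matrix (Fin n) (Fin n) F) :=
  Algebra.adjoin F {jordanBlock F n 0}

namespace jordanAlgebra

def gen : jordanAlgebra F n := ⟨jordanBlock F n 0, Algebra.self_mem_adjoin_singleton F _⟩

def maxIdeal : Ideal (jordanAlgebra F n) := Ideal.span {gen F n}

def ofCoeffs : (Fin (n - 1) → F) →ₗ[F] jordanAlgebra F n :=
  Fintype.linearCombination F fun k => gen F n ^ ((k : ℕ) + 1)

variable {F n}

theorem coe_ofCoeffs (s : Fin (n - 1) → F) :
    (ofCoeffs F n s : Matrix (Fin n) (Fin n) F) = ∑ k, s k • jordanBlock F n 0 ^ ((k : ℕ) + 1) := by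
  simp [ofCoeffs, Fintype.linearCombination_apply, gen]

theorem maxIdeal_pow : maxIdeal F n ^ n = ⊥ := by
  rw [maxIdeal, Ideal.span_singleton_pow, Ideal.span_singleton_eq_bot]
  exact Subtype.ext (jordanBlock_zero_pow_eq_zero le_rfl)

theorem ofCoeffs_injective : Function.Injective (ofCoeffs F n) :=
  linearIndependent_iff_injective_fintypeLinearCombination.1
    (.of_comp (jordanAlgebra F n).val.toLinearMap linearIndependent_jordanBlock_zero_pow)

theorem ofCoeffs_mem_maxIdeal (s : Fin (n - 1) → F) : ofCoeffs F n s ∈ maxIdeal F n := by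
  rw [ofCoeffs, Fintype.linearCombination_apply]
  refine Submodule.sum_mem _ fun k _ => Submodule.smul_of_tower_mem _ _ ?_
  rw [pow_succ]
  exact Ideal.mul_mem_left _ _ (Ideal.mem_span_singleton_self _)

theorem exists_eq_algebraMap_add_ofCoeffs (y : jordanAlgebra F n) :
    ∃ c s, y = algebraMap F _ c + ofCoeffs F n s := by
  obtain ⟨c, hc⟩ := exists_eq_sum_range_pow_of_mem_adjoin (jordanBlock_zero_pow_eq_zero le_rfl) y.2
  refine ⟨c 0, fun k => c (k + 1), Subtype.ext ?_⟩
  rw [hc, Subalgebra.coe_add, coe_ofCoeffs]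
  rcases n with _ | n
  · exact Subsingleton.elim _ _
  · rw [sum_range_succ',
      Fin.sum_univ_eq_sum_range (fun k => c (k + 1) • jordanBlock F _ 0 ^ (k + 1))]
    simp [Algebra.algebraMap_eq_smul_one, add_comm]

variable [NeZero n]

theorem mem_maxIdeal_iff {z : jordanAlgebra F n} : z ∈ maxIdeal F n ↔ ∃ s, ofCoeffs F n s = z := by
  refine ⟨fun hz => ?_, by rintro ⟨s, rfl⟩; exact ofCoeffs_mem_maxIdeal s⟩
  obtain ⟨c, s, rfl⟩ := exists_eq_algebraMap_add_ofCoeffs z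
  obtain rfl : c = 0 := (algebraMap_mem_iff_of_pow_eq_bot (I := maxIdeal F n) maxIdeal_pow).1 <| by
    simpa using (maxIdeal F n).sub_mem hz (ofCoeffs_mem_maxIdeal s)
  exact ⟨s, by simp⟩

theorem not_isUnit_coe_of_mem_maxIdeal {z : jordanAlgebra F n} (hz : z ∈ maxIdeal F n) :
    ¬IsUnit (z : Matrix (Fin n) (Fin n) F) :=
  IsNilpotent.not_isUnit ⟨n, by
    rw [← Subalgebra.coe_pow, pow_eq_zero_of_mem_of_pow_eq_bot (I := maxIdeal F n) maxIdeal_pow hz,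
      Subalgebra.coe_zero]⟩

theorem exists_smul_truncExp_ofCoeffs_eq (hfac : ∀ k < n, (k ! : F) ≠ 0) {y : jordanAlgebra F n}
    (hy : IsUnit (y : Matrix (Fin n) (Fin n) F)) :
    ∃ (r : Fˣ) (s : Fin (n - 1) → F), (r : F) • truncExp F n (ofCoeffs F n s) = y := by
  obtain ⟨c, s, rfl⟩ := exists_eq_algebraMap_add_ofCoeffs y
  have hc : c ≠ 0 := by
    rintro rfl
    rw [map_zero, zero_add] at hy
    exact not_isUnit_coe_of_mem_maxIdeal (ofCoeffs_mem_maxIdeal s) hy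
  obtain ⟨x, hx, hcx⟩ := exists_smul_truncExp_eq (NeZero.ne n) hfac maxIdeal_pow hc
    (ofCoeffs_mem_maxIdeal s)
  obtain ⟨t, rfl⟩ := mem_maxIdeal_iff.1 hx
  exact ⟨Units.mk0 c hc, t, hcx⟩

end jordanAlgebra

end JordanAlgebra

open jordanAlgebra in
/-- For `char F = 0` or `char F > n`, the map
`(r, s₁,…,s_{n−1}) ↦ r·exp(Σ s_k N^k)` (`N = J_n(0)`) is a group isomorphism
from `Fˣ × F^{n−1}` onto the unit group `F[J_n(a)]ˣ`. -/
theorem units_of_jordan_algebra_iso {F : Type*} [Field F] {n : ℕ} (hn : 0 < n)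
    (hchar : ∀ k : ℕ, 0 < k → k ≤ n → (k : F) ≠ 0) (a : F) :
    let N : Matrix (Fin n) (Fin n) F := jordanBlock F n 0
    let ψ : Fˣ × (Fin (n - 1) → F) → Matrix (Fin n) (Fin n) F :=
      fun p => (p.1 : F) • texp (∑ k : Fin (n - 1), p.2 k • N ^ ((k : ℕ) + 1))
    (∀ p q : Fˣ × (Fin (n - 1) → F), ψ (p.1 * q.1, p.2 + q.2) = ψ p * ψ q) ∧
    Function.Injective ψ ∧
    (∀ M : Matrix (Fin n) (Fin n) F,
      (∃ p, ψ p = M) ↔ M ∈ Algebra.adjoin F {jordanBlock F n a} ∧ IsUnit M) := by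
  intro N ψ
  have : NeZero n := ⟨hn.ne'⟩
  have hfac (k : ℕ) (hk : k < n) : (k ! : F) ≠ 0 := natCast_factorial_ne_zero hchar hk.le
  have hI : maxIdeal F n ^ n = ⊥ := maxIdeal_pow
  have hψ (p : Fˣ × (Fin (n - 1) → F)) :
      ψ p = ((p.1 : F) • truncExp F n (ofCoeffs F n p.2) : jordanAlgebra F n) := by
    rw [Subalgebra.coe_smul, ← Subalgebra.coe_val, map_truncExp, Subalgebra.coe_val, coe_ofCoeffs]
    rfl
  refine ⟨fun p q => ?_, fun p q h => ?_, fun M => ⟨?_, ?_⟩⟩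
  · rw [hψ, hψ, hψ, map_add, Units.val_mul, ← Subalgebra.coe_mul, smul_mul_smul_comm,
      truncExp_add hfac hI (ofCoeffs_mem_maxIdeal _) (ofCoeffs_mem_maxIdeal _)]
  · rw [hψ, hψ] at h
    obtain ⟨hr, hs⟩ := eq_and_eq_of_smul_truncExp_eq hn.ne' hfac hI p.1.ne_zero
      (ofCoeffs_mem_maxIdeal _) (ofCoeffs_mem_maxIdeal _) (Subtype.val_injective h)
    exact Prod.ext (Units.ext hr) (ofCoeffs_injective hs)
  · rintro ⟨p, rfl⟩
    rw [adjoin_jordanBlock, hψ]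
    exact ⟨Subtype.prop _, (isUnit_smul_truncExp hn.ne' hfac hI p.1.ne_zero
      (ofCoeffs_mem_maxIdeal _)).map (jordanAlgebra F n).val⟩
  · rintro ⟨hM, hunit⟩
    rw [adjoin_jordanBlock] at hM
    obtain ⟨r, s, hrs⟩ := exists_smul_truncExp_ofCoeffs_eq hfac (y := ⟨M, hM⟩) hunit
    exact ⟨(r, s), by rw [hψ, hrs]⟩
end

section
/- Let F be a finite field of odd characteristic with nontrivial additive character τ̂, and let γ(a) = q^{−1/2}Σ_x τ̂(ax²) denote the Weil/Gauss constant for a ∈ Fˣ. Define, for a quadratic extension E = F(√α) (α a non-square), δ(ε) = γ(α·(ε/ε̄)₋) if (ε/ε̄)₋ ≠ 0, and δ(ε) = (the Legendre symbol of ε/ε̄ ∈ {±1}) if (ε/ε̄)₋ = 0, where ε̄ is the conjugate and (ζ)₋ the √α-coefficient of ζ ∈ E. Then the function c(ε,η) defined by: c(ε,η) = 1 if (ε/ε̄)₋·(η/η̄)₋·((εη)/(εη)‾)₋ = 0, and c(ε,η) = γ(α(ε/ε̄)₋)·γ(α(η/η̄)₋)·γ(α((εη)/(εη)‾)₋)⁻¹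 otherwise, satisfies c(ε,η) = δ(η)·δ(εη)⁻¹·δ(ε) for all ε,η ∈ Eˣ; in particular c is a 2-coboundary on Eˣ. -/
open scoped Classical

/-!
Write `ε / ε̄ = p + m√α`. This element has norm `p² - αm² = 1`, and the coordinates of a product
are `(p₁p₂ + αm₁m₂, p₁m₂ + p₂m₁)`. Counting square roots gives `γ(b) = χ(b)·γ(1)` for the
quadratic character `χ`, and `γ(1)² = χ(-1)` is the classical evaluation of the square of a
quadratic Gauss sum; so `δ` takes the value `χ(αm)·γ(1)` when `m ≠ 0` and `χ(p)` when `m = 0`.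
If no coordinate `m` vanishes, both sides of the identity are the same product of `γ`'s.
If `m₁ = 0` then `p₁ = ±1` and `δ(εη) = χ(p₁)·δ(η)`. If only `m₃ = 0`, the norm relation gives
`-m₁m₂·p₃ = m₁²`, so `χ(-m₁m₂) = χ(p₃)`, and together with `γ(1)² = χ(-1)` this is the identity.
-/

section GaussSum

variable {F : Type*} [Field F] [Fintype F] {R : Type*} [CommRing R] [IsDomain R]

theorem sum_addChar_mul_sq (hF : ringChar F ≠ 2) {ψ : AddChar F R} (hψ : ψ ≠ 1) {a : F}
    (ha : a ≠ 0) :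
    ∑ x : F, ψ (a * x ^ 2) = (quadraticChar F).ringHomComp (Int.castRingHom R) a *
      gaussSum ((quadraticChar F).ringHomComp (Int.castRingHom R)) ψ := by
  set χ := (quadraticChar F).ringHomComp (Int.castRingHom R)
  have hfiber : ∀ j : F, ((Finset.univ.filter fun x : F => x ^ 2 = j).card : R) = χ j + 1 :=
    fun j => by
      have := quadraticChar_card_sqrts hF j
      rw [Set.toFinset_ofPred] at this
      simp only [χ, MulChar.ringHomComp_apply, eq_intCast]
      exact_mod_cast congrArg (Int.cast : ℤ → R) this
  have hshift : ∑ j : F, ψ.mulShift a j = 0 :=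
    AddChar.sum_eq_zero_of_ne_one ((AddChar.IsPrimitive.of_ne_one hψ) ha)
  calc ∑ x : F, ψ (a * x ^ 2) = ∑ j : F, (χ j + 1) * ψ.mulShift a j := by
        rw [← Finset.sum_fiberwise' Finset.univ (· ^ 2) (fun j => ψ (a * j))]
        simp [hfiber]
    _ = gaussSum χ (ψ.mulShift a) := by
        simp only [add_mul, one_mul, Finset.sum_add_distrib, hshift, add_zero, gaussSum]
    _ = χ a * gaussSum χ ψ := by
        rw [← ha.isUnit.unit_spec, gaussSum_mulShift_eq, ((quadraticChar_isQuadratic F).comp _).inv]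

end GaussSum

theorem inv_sqrt_card_mul_gaussSum_sq {F : Type*} [Field F] [Fintype F]
    (hF : ringChar F ≠ 2) {ψ : AddChar F ℂ} (hψ : ψ ≠ 1) :
    (((√(Fintype.card F) : ℝ) : ℂ)⁻¹ *
      gaussSum ((quadraticChar F).ringHomComp (Int.castRingHom ℂ)) ψ) ^ 2 =
      (quadraticChar F).ringHomComp (Int.castRingHom ℂ) (-1) := by
  have hχ1 : (quadraticChar F).ringHomComp (Int.castRingHom ℂ) ≠ 1 :=
    (MulChar.ringHomComp_ne_one_iff Int.cast_injective).mpr (quadraticChar_ne_one hF)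
  have hsq := gaussSum_sq hχ1 ((quadraticChar_isQuadratic F).comp _)
    (AddChar.IsPrimitive.of_ne_one hψ)
  have hq : ((√(Fintype.card F) : ℝ) : ℂ) ^ 2 = Fintype.card F := by
    rw [← Complex.ofReal_pow, Real.sq_sqrt (Nat.cast_nonneg _), Complex.ofReal_natCast]
  have hq0 : (Fintype.card F : ℂ) ≠ 0 := Nat.cast_ne_zero.mpr Fintype.card_ne_zero
  rw [mul_pow, inv_pow, hq, hsq]
  field_simp

theorem ite_isSquare_eq_quadraticChar {F : Type*} [Field F] [Fintype F] {a : F} (ha : a ≠ 0) :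
    (if IsSquare a then 1 else -1 : ℂ) = (quadraticChar F).ringHomComp (Int.castRingHom ℂ) a := by
  simp [quadraticChar_apply, quadraticCharFun, ha, apply_ite (Int.cast : ℤ → ℂ)]

theorem MulChar.IsQuadratic.apply_mul_self {F R : Type*} [Field F] [CommRing R] [Nontrivial R]
    {χ : MulChar F R} (hχ : χ.IsQuadratic) {a : F} (ha : a ≠ 0) :
    χ a * χ a = 1 := by
  rcases hχ a with h | h | h
  · exact absurd h (MulChar.apply_ne_zero_iff.mpr ha.isUnit)
  all_goals simp [h]

theorem MulChar.IsQuadratic.apply_eq_of_mul_eq_mul_self {F R : Type*} [Field F] [CommRing R]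
    [Nontrivial R] {χ : MulChar F R} (hχ : χ.IsQuadratic) {x y z : F}
    (hz : z ≠ 0) (h : x * y = z * z) : χ x = χ y := by
  have hy : y ≠ 0 := by rintro rfl; simp_all
  calc χ x = χ x * (χ y * χ y) := by rw [hχ.apply_mul_self hy, mul_one]
    _ = χ (x * y) * χ y := by rw [map_mul]; ring
    _ = χ z * χ z * χ y := by rw [h, map_mul]
    _ = χ y := by rw [hχ.apply_mul_self hz, one_mul]

section WeilDelta

variable {F K : Type*} [Field F] [Field K] (χ : MulChar F K) (s : K) (α : F)

/-- The paper's `δ` at the norm-one element `p + m√α`, with `γ(αm)` written as `χ(αm)·s`. -/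
noncomputable def weilDelta (p m : F) : K :=
  if m ≠ 0 then χ (α * m) * s else χ p

variable {χ s α}

theorem weilDelta_mul_left {c : F} (hc : c ≠ 0) (p m : F) :
    weilDelta χ s α (c * p) (c * m) = χ c * weilDelta χ s α p m := by
  by_cases hm : m = 0
  · simp [weilDelta, hm]
  · simp only [weilDelta, ne_eq, mul_eq_zero, hc, hm, or_self, not_false_eq_true, if_true,
      mul_left_comm α, map_mul, mul_assoc]

theorem weilDelta_ne_zero (hs : s ≠ 0) (hα : α ≠ 0) {p m : F} (h : p * p - α * (m * m) = 1) :
    weilDelta χ s α p m ≠ 0 := by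
  have hχ0 : ∀ {a : F}, a ≠ 0 → χ a ≠ 0 := fun ha => MulChar.apply_ne_zero_iff.mpr ha.isUnit
  by_cases hm : m = 0
  · have hp : p ≠ 0 := by rintro rfl; simp [hm] at h
    simpa [weilDelta, hm] using hχ0 hp
  · rw [weilDelta, if_pos hm]
    exact mul_ne_zero (hχ0 (mul_ne_zero hα hm)) hs

theorem weilDelta_coboundary_of_left_eq_zero (hs : s ≠ 0) (hα : α ≠ 0) {p₁ m₁ p₂ m₂ : F}
    (h₁ : p₁ * p₁ - α * (m₁ * m₁) = 1) (h₂ : p₂ * p₂ - α * (m₂ * m₂) = 1) (hm₁ : m₁ = 0) :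
    weilDelta χ s α p₂ m₂ * (weilDelta χ s α (p₁ * p₂ + α * (m₁ * m₂)) (p₁ * m₂ + p₂ * m₁))⁻¹ *
      weilDelta χ s α p₁ m₁ = 1 := by
  subst hm₁
  have hp₁ : p₁ ≠ 0 := by rintro rfl; simp at h₁
  have hχp₁ : χ p₁ ≠ 0 := MulChar.apply_ne_zero_iff.mpr hp₁.isUnit
  simp only [zero_mul, mul_zero, add_zero]
  rw [weilDelta_mul_left hp₁, show weilDelta χ s α p₁ 0 = χ p₁ by simp [weilDelta]]
  field_simp [weilDelta_ne_zero hs hα h₂]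

theorem weilDelta_coboundary_of_mul_eq_zero (hχ : χ.IsQuadratic) (hs : s ^ 2 = χ (-1))
    (hα : α ≠ 0) {p₁ m₁ p₂ m₂ : F} (h₂ : p₂ * p₂ - α * (m₂ * m₂) = 1) (hm₁ : m₁ ≠ 0)
    (hm₂ : m₂ ≠ 0) (hm : p₁ * m₂ + p₂ * m₁ = 0) :
    weilDelta χ s α p₂ m₂ * (weilDelta χ s α (p₁ * p₂ + α * (m₁ * m₂)) (p₁ * m₂ + p₂ * m₁))⁻¹ *
      weilDelta χ s α p₁ m₁ = 1 := by
  set p := p₁ * p₂ + α * (m₁ * m₂)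
  have hsquare : α * m₂ * (α * m₁) * -1 * p = α * m₁ * (α * m₁) := by
    linear_combination (-α ^ 2 * m₁ * p₂) * hm + (α ^ 2 * m₁ ^ 2) * h₂
  have hαm₁ : α * m₁ ≠ 0 := mul_ne_zero hα hm₁
  have hp : p ≠ 0 := by rintro hp; simp [hp, hαm₁] at hsquare
  calc _ = χ (α * m₂) * s * (χ p)⁻¹ * (χ (α * m₁) * s) := by
          rw [weilDelta, weilDelta, weilDelta, if_pos hm₁, if_pos hm₂, if_neg (not_not_intro hm)]
    _ = χ (α * m₂ * (α * m₁) * -1) * (χ p)⁻¹ := by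
          rw [map_mul χ _ (-1), map_mul χ (α * m₂), ← hs]; ring
    _ = 1 := by
      rw [hχ.apply_eq_of_mul_eq_mul_self hαm₁ hsquare,
        mul_inv_cancel₀ (MulChar.apply_ne_zero_iff.mpr hp.isUnit)]

theorem weilDelta_coboundary_eq_one (hχ : χ.IsQuadratic) (hs : s ^ 2 = χ (-1))
    (hα : α ≠ 0) {p₁ m₁ p₂ m₂ : F} (h₁ : p₁ * p₁ - α * (m₁ * m₁) = 1)
    (h₂ : p₂ * p₂ - α * (m₂ * m₂) = 1) (h : m₁ * m₂ * (p₁ * m₂ + p₂ * m₁) = 0) :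
    weilDelta χ s α p₂ m₂ * (weilDelta χ s α (p₁ * p₂ + α * (m₁ * m₂)) (p₁ * m₂ + p₂ * m₁))⁻¹ *
      weilDelta χ s α p₁ m₁ = 1 := by
  have hs0 : s ≠ 0 := by
    rintro rfl
    exact MulChar.apply_ne_zero_iff.mpr isUnit_one.neg (by simpa using hs.symm)
  by_cases hm₁ : m₁ = 0
  · exact weilDelta_coboundary_of_left_eq_zero hs0 hα h₁ h₂ hm₁
  by_cases hm₂ : m₂ = 0
  · have := weilDelta_coboundary_of_left_eq_zero (χ := χ) hs0 hα h₂ h₁ hm₂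
    rw [mul_comm p₂ p₁, mul_comm m₂ m₁, add_comm (p₂ * m₁)] at this
    linear_combination this
  exact weilDelta_coboundary_of_mul_eq_zero hχ hs hα h₂ hm₁ hm₂
    (by simpa [hm₁, hm₂] using h)

end WeilDelta

theorem ite_isSquare_eq_weilDelta {F : Type*} [Field F] [Fintype F] {γ : F → ℂ} {s : ℂ}
    (hγ : ∀ {b : F}, b ≠ 0 → γ b = (quadraticChar F).ringHomComp (Int.castRingHom ℂ) b * s)
    {α p m : F} (hα : α ≠ 0) (h : p * p - α * (m * m) = 1) :
    (if m ≠ 0 then γ (α * m) else if IsSquare p then 1 else -1) =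
      weilDelta ((quadraticChar F).ringHomComp (Int.castRingHom ℂ)) s α p m := by
  by_cases hm : m = 0
  · have hp : p ≠ 0 := by rintro rfl; simp [hm] at h
    simp only [weilDelta, hm, ne_eq, not_true_eq_false, if_false]
    exact ite_isSquare_eq_quadraticChar hp
  · simp only [weilDelta, if_pos hm, hγ (mul_ne_zero hα hm)]

section QuadraticExtension

variable {F E : Type*} [Field F] [Field E] [Algebra F E] {α : F} {ω : E} {pl mi : E → F}

theorem conj_involutive (hrep : ∀ ζ : E, ζ = algebraMap F E (pl ζ) + mi ζ • ω)
    {σ : E ≃ₐ[F] E} (hσ : σ ω = -ω) : Function.Involutive σ := fun x => by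
  conv_lhs => rw [hrep x]
  conv_rhs => rw [hrep x]
  simp [hσ]

variable (hrep : ∀ ζ : E, ζ = algebraMap F E (pl ζ) + mi ζ • ω)
  (hind : ∀ a b : F, algebraMap F E a + b • ω = 0 → a = 0 ∧ b = 0)
include hrep hind

theorem coords_eq_of_eq_add_smul {ζ : E} {a b : F} (h : ζ = algebraMap F E a + b • ω) :
    pl ζ = a ∧ mi ζ = b := by
  have := hind (pl ζ - a) (mi ζ - b) (by
    rw [map_sub, sub_smul]
    linear_combination (hrep ζ).symm + h)
  exact ⟨sub_eq_zero.mp this.1, sub_eq_zero.mp this.2⟩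

theorem coords_mul (hω : ω * ω = algebraMap F E α) (x y : E) :
    pl (x * y) = pl x * pl y + α * (mi x * mi y) ∧ mi (x * y) = pl x * mi y + pl y * mi x := by
  refine coords_eq_of_eq_add_smul hrep hind ?_
  conv_lhs => rw [hrep x, hrep y]
  simp only [Algebra.smul_def, map_add, map_mul]
  linear_combination (algebraMap F E (mi x) * algebraMap F E (mi y)) * hω

theorem coords_norm_eq_one {σ : E ≃ₐ[F] E} (hσ : σ ω = -ω) (hω : ω * ω = algebraMap F E α)
    {u : E} (hu : u * σ u = 1) : pl u * pl u - α * (mi u * mi u) = 1 := by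
  have hσu : pl (σ u) = pl u ∧ mi (σ u) = -mi u := by
    refine coords_eq_of_eq_add_smul hrep hind ?_
    conv_lhs => rw [hrep u]
    rw [map_add, AlgEquiv.commutes, map_smul, hσ, smul_neg, neg_smul]
  have h1 : pl (1 : E) = 1 := (coords_eq_of_eq_add_smul hrep hind (b := 0) (by simp)).1
  have := (coords_mul hrep hind hω u (σ u)).1
  rw [hu, h1, hσu.1, hσu.2] at this
  linear_combination -this

theorem coords_norm_div_conj_eq_one {σ : E ≃ₐ[F] E} (hσ : σ ω = -ω)
    (hω : ω * ω = algebraMap F E α) {x : E} (hx : x ≠ 0) :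
    pl (x / σ x) * pl (x / σ x) - α * (mi (x / σ x) * mi (x / σ x)) = 1 := by
  refine coords_norm_eq_one hrep hind hσ hω ?_
  have hσx : σ x ≠ 0 := by simpa using hx
  rw [map_div₀, conj_involutive hrep hσ, div_mul_div_cancel₀ hσx, div_self hx]

theorem coords_div_conj_mul {σ : E ≃ₐ[F] E} (hω : ω * ω = algebraMap F E α) (x y : E) :
    pl (x * y / σ (x * y)) = pl (x / σ x) * pl (y / σ y) + α * (mi (x / σ x) * mi (y / σ y)) ∧
      mi (x * y / σ (x * y)) = pl (x / σ x) * mi (y / σ y) + pl (y / σ y) * mi (x / σ x) := by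
  rw [map_mul, ← div_mul_div_comm]
  exact coords_mul hrep hind hω _ _

end QuadraticExtension

/-- The explicit 2-cocycle `c(ε,η)` built from normalized Gauss sums on the unit
group of a quadratic extension `E = F(√α)` is the coboundary of the explicit
function `δ` built from Gauss sums and Legendre symbols. -/
theorem gauss_cocycle_is_coboundary {F E : Type*} [Field F] [Fintype F]
    [Field E] [Algebra F E]
    (hodd : ringChar F ≠ 2)
    (τ : AddChar F ℂ) (hτ : ∃ x : F, τ x ≠ 1)
    (α : F) (hα : ¬ IsSquare α)
    (ω : E) (hω : ω * ω = algebraMap F E α)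
    (pl mi : E → F)
    (hrep : ∀ ζ : E, ζ = algebraMap F E (pl ζ) + mi ζ • ω)
    (hind : ∀ a b : F, algebraMap F E a + b • ω = 0 → a = 0 ∧ b = 0)
    (σ : E ≃ₐ[F] E) (hσ : σ ω = -ω) :
    let γ : F → ℂ := fun b =>
      ((Real.sqrt (Fintype.card F) : ℝ) : ℂ)⁻¹ * ∑ x : F, τ (b * x ^ 2)
    let m : Eˣ → F := fun e => mi ((e : E) / σ e)
    let p : Eˣ → F := fun e => pl ((e : E) / σ e)
    let δ : Eˣ → ℂ := fun e =>
      if m e ≠ 0 then γ (α * m e) else (if IsSquare (p e) then 1 else -1)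
    let c : Eˣ → Eˣ → ℂ := fun e h =>
      if m e * m h * m (e * h) = 0 then 1
      else γ (α * m e) * γ (α * m h) * (γ (α * m (e * h)))⁻¹
    ∀ ε η : Eˣ, c ε η = δ η * (δ (ε * η))⁻¹ * δ ε := by
  intro γ m p δ c ε η
  have hτ1 : τ ≠ 1 := AddChar.ne_one_iff.mpr hτ
  have hα0 : α ≠ 0 := by rintro rfl; exact hα ⟨0, by simp⟩
  set χ := (quadraticChar F).ringHomComp (Int.castRingHom ℂ)
  set s : ℂ := ((√(Fintype.card F) : ℝ) : ℂ)⁻¹ * gaussSum χ τ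
  have hγ : ∀ {b : F}, b ≠ 0 → γ b = χ b * s := fun hb => by
    simp only [γ, s, sum_addChar_mul_sq hodd hτ1 hb]; ring
  have hnorm : ∀ e : Eˣ, p e * p e - α * (m e * m e) = 1 := fun e =>
    coords_norm_div_conj_eq_one hrep hind hσ hω e.ne_zero
  have hδ : ∀ e : Eˣ, δ e = weilDelta χ s α (p e) (m e) := fun e =>
    ite_isSquare_eq_weilDelta hγ hα0 (hnorm e)
  obtain ⟨hp, hm⟩ : p (ε * η) = p ε * p η + α * (m ε * m η) ∧
      m (ε * η) = p ε * m η + p η * m ε :=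
    coords_div_conj_mul hrep hind hω (ε : E) η
  by_cases h : m ε * m η * m (ε * η) = 0
  · rw [show c ε η = 1 from if_pos h, hδ, hδ, hδ, hp, hm]
    rw [hm] at h
    exact (weilDelta_coboundary_eq_one ((quadraticChar_isQuadratic F).comp _)
      (inv_sqrt_card_mul_gaussSum_sq hodd hτ1) hα0
      (hnorm ε) (hnorm η) h).symm
  · simp only [c, δ, if_neg h]
    obtain ⟨⟨hε, hη⟩, hεη⟩ := mul_ne_zero_iff.mp h |>.imp_left mul_ne_zero_iff.mp
    simp only [if_pos hε, if_pos hη, if_pos hεη]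
    ring
end

section
/- Let F be a field, n ≥ 1, β ∈ Mₙ(F) with irreducible characteristic polynomial, so E = F[β] is a field of degree n over F embedded in Mₙ(F) via its regular representation with respect to some F-basis. Then there exists a symmetric invertible matrix g ∈ GLₙ(F) with ᵗβ = gβg⁻¹ (for instance g = (Tr_{E/F}(uᵢuⱼ))ᵢⱼ for a basis u₁,…,uₙ of E), the map X ↦ X* = g⁻¹·ᵗX·g is an F-algebra anti-involution of Mₙ(F) fixing F[β] pointwise, and Mₙ(F) decomposes as W₋ ⊕ W₊ where W± = {X : X* = ±X}, with F[β] ⊆ W₊. -/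
open Matrix Polynomial

set_option linter.unnecessarySimpa false

theorem exists_symmetric_conj {F : Type*} [Field F] {n : ℕ} (hn : n ≠ 0)
    (β : Matrix (Fin n) (Fin n) F)
    (hirr : Irreducible (Matrix.charpoly β)) :
    ∃ g : Matrix (Fin n) (Fin n) F, IsUnit g ∧ gᵀ = g ∧ βᵀ * g = g * β := by
  classical
  haveI : NeZero n := ⟨hn⟩
  have hpm : (Matrix.charpoly β).Monic := Matrix.charpoly_monic β
  have hdeg : (Matrix.charpoly β).natDegree = n := by
    simpa using Matrix.charpoly_natDegree_eq_dim β
  -- invertibility of nonzero elements of F[β]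
  have hinv : ∀ q : F[X], aeval β q ≠ 0 → ∃ r : F[X],
      aeval β r * aeval β q = 1 := by
    intro q hq
    have hnd : ¬ Matrix.charpoly β ∣ q := by
      rintro ⟨s, rfl⟩
      exact hq (by rw [_root_.map_mul, Matrix.aeval_self_charpoly, zero_mul])
    obtain ⟨a, b, hab⟩ := hirr.coprime_iff_not_dvd.mpr hnd
    refine ⟨b, ?_⟩
    have := congrArg (aeval β) hab
    simpa [map_add, _root_.map_mul, Matrix.aeval_self_charpoly] using this
  -- the cyclic vector
  set v : Fin n → F := Pi.single (0 : Fin n) 1 with hv_def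
  have hv : v ≠ 0 := by
    intro h
    have := congrFun h 0
    simp [hv_def] at this
  have hker : ∀ q : F[X], aeval β q *ᵥ v = 0 → aeval β q = 0 := by
    intro q h0
    by_contra hq
    obtain ⟨r, hr⟩ := hinv q hq
    apply hv
    calc v = (1 : Matrix (Fin n) (Fin n) F) *ᵥ v := by simp
    _ = (aeval β r * aeval β q) *ᵥ v := by rw [hr]
    _ = aeval β r *ᵥ (aeval β q *ᵥ v) := (Matrix.mulVec_mulVec v _ _).symm
    _ = 0 := by rw [h0, Matrix.mulVec_zero]
  have hC : ∀ r s : F[X], aeval β r *ᵥ v = aeval β s *ᵥ v →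
      aeval β r = aeval β s := by
    intro r s h
    have h1 : aeval β (r - s) = 0 :=
      hker _ (by rw [map_sub, Matrix.sub_mulVec, h, sub_self])
    rw [map_sub] at h1
    exact sub_eq_zero.mp h1
  have hsmall : ∀ q : F[X], q ∈ degreeLT F n → q ≠ 0 → aeval β q ≠ 0 := by
    intro q hq hq0 h0
    have hdvd : minpoly F β ∣ q := minpoly.dvd F β h0
    have hmp : minpoly F β = Matrix.charpoly β :=
      (minpoly.eq_of_irreducible_of_monic hirr (Matrix.aeval_self_charpoly β) hpm).symm
    rw [hmp] at hdvd
    have h1 : (Matrix.charpoly β).degree ≤ q.degree :=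
      Polynomial.degree_le_of_dvd hdvd hq0
    rw [Polynomial.mem_degreeLT] at hq
    rw [Polynomial.degree_eq_natDegree hpm.ne_zero, hdeg] at h1
    exact absurd hq (not_lt.mpr h1)
  -- the linear isomorphism between coefficient space and Fⁿ
  let ψ : (Fin n → F) →ₗ[F] (Fin n → F) :=
    { toFun := fun c => aeval β (((degreeLTEquiv F n).symm c : F[X])) *ᵥ v
      map_add' := by
        intro a b
        simp [map_add, Submodule.coe_add, Matrix.add_mulVec]
      map_smul' := by
        intro a b
        simp [_root_.map_smul, Submodule.coe_smul, Matrix.smul_mulVec] }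
  have hψ0 : ∀ c, ψ c = 0 → c = 0 := by
    intro c h0
    by_contra hc
    have hq0 : (((degreeLTEquiv F n).symm c : F[X])) ≠ 0 := by
      intro h
      apply hc
      have h1 : (degreeLTEquiv F n).symm c = 0 := Subtype.ext h
      simpa using congrArg (degreeLTEquiv F n) h1
    exact absurd (hker _ h0) (hsmall _ ((degreeLTEquiv F n).symm c).2 hq0)
  have hψinj : Function.Injective ψ := by
    intro a b hab
    have := hψ0 (a - b) (by rw [map_sub, hab, sub_self])
    exact sub_eq_zero.mp this
  have hψsurj : Function.Surjective ψ :=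
    LinearMap.surjective_of_injective hψinj
  let E : (Fin n → F) ≃ₗ[F] (Fin n → F) :=
    LinearEquiv.ofBijective ψ ⟨hψinj, hψsurj⟩
  let PL : (Fin n → F) →ₗ[F] F[X] :=
    (degreeLT F n).subtype ∘ₗ
      ((degreeLTEquiv F n).symm : (Fin n → F) ≃ₗ[F] degreeLT F n).toLinearMap ∘ₗ
      (E.symm : (Fin n → F) ≃ₗ[F] (Fin n → F)).toLinearMap
  have hP1 : ∀ x : Fin n → F, aeval β (PL x) *ᵥ v = x := fun x =>
    E.apply_symm_apply x
  have hPL0 : ∀ c : Fin n → F, PL c = 0 → c = 0 := by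
    intro c h
    have := hP1 c
    rw [h] at this
    simpa using this.symm
  have hPLmem : ∀ c : Fin n → F, PL c ∈ degreeLT F n := fun c =>
    ((degreeLTEquiv F n).symm (E.symm c)).2
  set z : Fin n := 0 with hz_def
  set A : Fin n → Matrix (Fin n) (Fin n) F :=
    fun i => aeval β (PL (Pi.single i 1)) with hA_def
  -- linear combination formula
  have hrepr : ∀ c : Fin n → F, c = ∑ j, c j • (Pi.single j 1 : Fin n → F) := by
    intro c
    ext k
    simp [Pi.single_apply, Finset.sum_apply]
  have hAc : ∀ c : Fin n → F, aeval β (PL c) = ∑ j, c j • A j := by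
    intro c
    conv_lhs => rw [hrepr c]
    rw [map_sum, map_sum]
    refine Finset.sum_congr rfl fun j _ => ?_
    rw [_root_.map_smul, _root_.map_smul]
  -- conjugation by β
  have hstep : ∀ x : Fin n → F, aeval β (PL (β *ᵥ x)) = β * aeval β (PL x) := by
    intro x
    have h1 : β * aeval β (PL x) = aeval β (X * PL x) := by
      rw [_root_.map_mul, aeval_X]
    rw [h1]
    apply hC
    rw [hP1, ← h1, ← Matrix.mulVec_mulVec, hP1]
  set g : Matrix (Fin n) (Fin n) F :=
    Matrix.of (fun i j => (A i * A j) z z) with hg_def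
  have hAcomm : ∀ i j, A i * A j = A j * A i := by
    intro i j
    simp only [hA_def]
    rw [← _root_.map_mul (aeval β), ← _root_.map_mul (aeval β), mul_comm]
  have hgsym : gᵀ = g := by
    ext i j
    simp only [hg_def, Matrix.transpose_apply, Matrix.of_apply]
    rw [hAcomm]
  have hβA : ∀ i, β * A i = A i * β := by
    intro i
    have : (X : F[X]) * PL (Pi.single i 1) = PL (Pi.single i 1) * X := mul_comm _ _
    have h2 := congrArg (aeval β) this
    rw [_root_.map_mul, _root_.map_mul, aeval_X] at h2
    exact h2
  have hsumA : ∀ c : Fin n → F, ∑ k, c k • A k = aeval β (PL c) :=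
    fun c => (hAc c).symm
  have hβsum : ∀ i, ∑ k, β k i • A k = β * A i := by
    intro i
    have h1 := hAc (β *ᵥ Pi.single i 1)
    rw [hstep] at h1
    have h2 : ∀ k, (β *ᵥ Pi.single i (1:F)) k = β k i := by
      intro k; simp [Matrix.mulVec_single]
    rw [h1]
    refine Finset.sum_congr rfl fun k _ => ?_
    rw [h2]
  have hβg : βᵀ * g = g * β := by
    ext i j
    rw [Matrix.mul_apply, Matrix.mul_apply]
    have lhs : ∑ k, βᵀ i k * g k j = ((∑ k, β k i • A k) * A j) z z := by
      rw [Finset.sum_mul, Matrix.sum_apply]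
      refine Finset.sum_congr rfl fun k _ => ?_
      simp only [hg_def, Matrix.transpose_apply, Matrix.of_apply,
        smul_mul_assoc, Matrix.smul_apply, smul_eq_mul]
    have rhs : ∑ k, g i k * β k j = (A i * ∑ k, β k j • A k) z z := by
      rw [Finset.mul_sum, Matrix.sum_apply]
      refine Finset.sum_congr rfl fun k _ => ?_
      simp only [hg_def, Matrix.of_apply, mul_smul_comm, Matrix.smul_apply,
        smul_eq_mul, mul_comm]
    rw [lhs, rhs, hβsum, hβsum]
    rw [← Matrix.mul_assoc, ← hβA]
  have hdetg : g.det ≠ 0 := by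
    intro hdet0
    obtain ⟨c, hc0, hgc⟩ := (Matrix.exists_mulVec_eq_zero_iff).mpr hdet0
    have hentry : ∀ i, (A i * aeval β (PL c)) z z = 0 := by
      intro i
      have h1 := congrFun hgc i
      have h2 : (g *ᵥ c) i = (A i * aeval β (PL c)) z z := by
        have e1 : (g *ᵥ c) i = ∑ j, g i j * c j := by
          simp [Matrix.mulVec, dotProduct]
        rw [e1]
        calc ∑ j, g i j * c j = ∑ j, (A i * (c j • A j)) z z := by
              refine Finset.sum_congr rfl fun k _ => ?_
              simp only [hg_def, Matrix.of_apply, mul_smul_comm,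
                Matrix.smul_apply, smul_eq_mul]
              ring
          _ = (A i * ∑ j, c j • A j) z z := by
              rw [Finset.mul_sum, Matrix.sum_apply]
          _ = (A i * aeval β (PL c)) z z := by rw [← hAc]
      rw [h2] at h1
      exact h1
    have hPLc0 : PL c ≠ 0 := fun h => hc0 (hPL0 c h)
    have hAc0 : aeval β (PL c) ≠ 0 := hsmall _ (hPLmem c) hPLc0
    obtain ⟨r, hr⟩ := hinv _ hAc0
    set x : Fin n → F := aeval β r *ᵥ v with hx_def
    have hrx : aeval β (PL x) = aeval β r := hC _ _ (by rw [hP1])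
    have hone : ((aeval β (PL x) * aeval β (PL c)) z z) = 1 := by
      rw [hrx, hr]
      exact Matrix.one_apply_eq z
    rw [hAc x, Finset.sum_mul, Matrix.sum_apply] at hone
    have hzero : ∀ j ∈ (Finset.univ : Finset (Fin n)),
        ((x j • A j) * aeval β (PL c)) z z = 0 := by
      intro j _
      rw [smul_mul_assoc, Matrix.smul_apply, hentry j, smul_zero]
    rw [Finset.sum_eq_zero hzero] at hone
    exact zero_ne_one hone
  exact ⟨g, (Matrix.isUnit_iff_isUnit_det g).mpr (isUnit_iff_ne_zero.mpr hdetg),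
    hgsym, hβg⟩


/-- For `β` with irreducible (separable) characteristic polynomial over a field
of odd characteristic, there is a symmetric invertible `g` with `ᵗβ = gβg⁻¹`;
`X ↦ X* = g⁻¹ᵗXg` is an anti-involution of `Mₙ(F)` fixing `F[β]` pointwise, and
`Mₙ(F) = W₋ ⊕ W₊` with `W± = {X : X* = ±X}`. -/
theorem involution_decomposition_of_irreducible {F : Type*} [Field F]
    (h2 : ringChar F ≠ 2) {n : ℕ}
    (β : Matrix (Fin n) (Fin n) F)
    (hirr : Irreducible (Matrix.charpoly β))
    (hsep : (Matrix.charpoly β).Separable) :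
    ∃ g : Matrix (Fin n) (Fin n) F, IsUnit g ∧ gᵀ = g ∧ βᵀ * g = g * β ∧
      (∀ X Y : Matrix (Fin n) (Fin n) F,
        g⁻¹ * (X * Y)ᵀ * g = (g⁻¹ * Yᵀ * g) * (g⁻¹ * Xᵀ * g)) ∧
      (∀ X : Matrix (Fin n) (Fin n) F, g⁻¹ * (g⁻¹ * Xᵀ * g)ᵀ * g = X) ∧
      (∀ X ∈ Algebra.adjoin F {β}, g⁻¹ * Xᵀ * g = X) ∧
      (∀ X : Matrix (Fin n) (Fin n) F,
        ∃! p : Matrix (Fin n) (Fin n) F × Matrix (Fin n) (Fin n) F,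
          g⁻¹ * p.1ᵀ * g = -p.1 ∧ g⁻¹ * p.2ᵀ * g = p.2 ∧ X = p.1 + p.2) := by
  classical
  have hn : n ≠ 0 := by
    rintro rfl
    have h1 : Matrix.charpoly β = 1 := Matrix.det_isEmpty
    exact hirr.not_isUnit (h1 ▸ isUnit_one)
  obtain ⟨g, hg, hgsym, hβg⟩ := exists_symmetric_conj hn β hirr
  have hdet : IsUnit g.det := (Matrix.isUnit_iff_isUnit_det g).mp hg
  have hgi : g * g⁻¹ = 1 := Matrix.mul_nonsing_inv g hdet
  have hig : g⁻¹ * g = 1 := Matrix.nonsing_inv_mul g hdet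
  have hginvT : g⁻¹ᵀ = g⁻¹ := by rw [Matrix.transpose_nonsing_inv, hgsym]
  have cancel1 : ∀ w : Matrix (Fin n) (Fin n) F, g * (g⁻¹ * w) = w := by
    intro w; rw [← Matrix.mul_assoc, hgi, Matrix.one_mul]
  have cancel2 : ∀ w : Matrix (Fin n) (Fin n) F, g⁻¹ * (g * w) = w := by
    intro w; rw [← Matrix.mul_assoc, hig, Matrix.one_mul]
  have hanti : ∀ X Y : Matrix (Fin n) (Fin n) F,
      g⁻¹ * (X * Y)ᵀ * g = (g⁻¹ * Yᵀ * g) * (g⁻¹ * Xᵀ * g) := by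
    intro X Y
    rw [Matrix.transpose_mul]
    simp only [Matrix.mul_assoc, cancel1, cancel2]
  have hinvol : ∀ X : Matrix (Fin n) (Fin n) F,
      g⁻¹ * (g⁻¹ * Xᵀ * g)ᵀ * g = X := by
    intro X
    simp only [Matrix.transpose_mul, Matrix.transpose_transpose, hgsym, hginvT,
      Matrix.mul_assoc, cancel1, cancel2, hig, Matrix.mul_one]
  have hβconj : g⁻¹ * βᵀ * g = β := by
    rw [Matrix.mul_assoc, hβg, ← Matrix.mul_assoc, hig, Matrix.one_mul]
  have hpow : ∀ k : ℕ, g⁻¹ * (β ^ k)ᵀ * g = β ^ k := by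
    intro k
    induction k with
    | zero => simp [Matrix.transpose_one, Matrix.mul_one, hig]
    | succ k ih =>
      rw [pow_succ, Matrix.transpose_mul]
      calc g⁻¹ * (βᵀ * (β ^ k)ᵀ) * g
          = (g⁻¹ * βᵀ * g) * (g⁻¹ * (β ^ k)ᵀ * g) := by
            simp only [Matrix.mul_assoc, cancel1, cancel2]
        _ = β * β ^ k := by rw [hβconj, ih]
        _ = β ^ (k + 1) := (pow_succ' β k).symm
  have hfix : ∀ X ∈ Algebra.adjoin F {β}, g⁻¹ * Xᵀ * g = X := by
    intro X hX
    rw [Algebra.adjoin_singleton_eq_range_aeval] at hX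
    obtain ⟨q, hq⟩ := hX
    have hq' : aeval β q = X := hq
    rw [← hq', Polynomial.aeval_eq_sum_range]
    simp only [Matrix.transpose_sum, Matrix.transpose_smul, Finset.mul_sum,
      Finset.sum_mul, smul_mul_assoc, mul_smul_comm, hpow]
  have h2' : (2 : F) ≠ 0 := Ring.two_ne_zero h2
  set s : F := (2 : F)⁻¹ with hs_def
  have hss : s + s = 1 := by rw [← two_mul]; exact mul_inv_cancel₀ h2'
  have hφadd : ∀ X Y : Matrix (Fin n) (Fin n) F,
      g⁻¹ * (X + Y)ᵀ * g = g⁻¹ * Xᵀ * g + g⁻¹ * Yᵀ * g := by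
    intro X Y
    rw [Matrix.transpose_add, Matrix.mul_add, Matrix.add_mul]
  have hφsub : ∀ X Y : Matrix (Fin n) (Fin n) F,
      g⁻¹ * (X - Y)ᵀ * g = g⁻¹ * Xᵀ * g - g⁻¹ * Yᵀ * g := by
    intro X Y
    rw [Matrix.transpose_sub, Matrix.mul_sub, Matrix.sub_mul]
  have hφsmul : ∀ (a : F) (X : Matrix (Fin n) (Fin n) F),
      g⁻¹ * (a • X)ᵀ * g = a • (g⁻¹ * Xᵀ * g) := by
    intro a X
    rw [Matrix.transpose_smul, mul_smul_comm, smul_mul_assoc]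
  refine ⟨g, hg, hgsym, hβg, hanti, hinvol, hfix, ?_⟩
  intro X
  refine ⟨(s • (X - g⁻¹ * Xᵀ * g), s • (X + g⁻¹ * Xᵀ * g)), ⟨?_, ?_, ?_⟩, ?_⟩
  · show g⁻¹ * (s • (X - g⁻¹ * Xᵀ * g))ᵀ * g = _
    rw [hφsmul, hφsub, hinvol, ← smul_neg, neg_sub]
  · show g⁻¹ * (s • (X + g⁻¹ * Xᵀ * g))ᵀ * g = _
    rw [hφsmul, hφadd, hinvol, add_comm]
  · show X = _ + _
    rw [← smul_add, sub_add_add_cancel, smul_add, ← add_smul, hss, one_smul]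
  · rintro ⟨a, b⟩ ⟨ha, hb, hab⟩
    dsimp only at ha hb hab
    have hφX : g⁻¹ * Xᵀ * g = -a + b := by rw [hab, hφadd, ha, hb]
    have h1 : X - g⁻¹ * Xᵀ * g = a + a := by rw [hφX, hab]; abel
    have hsum2 : X + g⁻¹ * Xᵀ * g = b + b := by rw [hφX, hab]; abel
    have e1 : s • (X - g⁻¹ * Xᵀ * g) = a := by
      rw [h1, smul_add, ← add_smul, hss, one_smul]
    have e2 : s • (X + g⁻¹ * Xᵀ * g) = b := by
      rw [hsum2, smul_add, ← add_smul, hss, one_smul]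
    rw [Prod.ext_iff]
    exact ⟨e1.symm, e2.symm⟩
end

section
/- Let F be a field of odd characteristic (or characteristic 0), β ∈ Mₙ(F) regular with a symmetric g ∈ GLₙ(F) satisfying ᵗβ = gβg⁻¹, and X* = g⁻¹ᵗXg the associated involution. Then the symplectic form ⟨X,Y⟩ = tr((XY − YX)β) on Mₙ(F) satisfies tr(XYβ) = tr(Y*X*β) for all X, Y; consequently the images of W₊ = {X* = X} and W₋ = {X* = −X} in V = Mₙ(F)/F[β] are totally isotropic, and V = W̄₋ ⊕ W̄₊ is a polarization of the symplectic space V. -/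
open Matrix

/-- For regular `β` with a symmetric `g` satisfying `ᵗβ = gβg⁻¹` and associated
involution `X* = g⁻¹ᵗXg` fixing `F[β]`: `tr(XYβ) = tr(Y*X*β)`; the `±1`
eigenspaces `W₊`, `W₋` of `*` are totally isotropic for `⟨X,Y⟩ = tr((XY−YX)β)`
modulo `F[β]`, and their images give a polarization of `V = Mₙ(F)/F[β]`. -/
theorem involution_gives_polarization {F : Type*} [Field F]
    (h2 : ringChar F ≠ 2) {n : ℕ}
    (β g : Matrix (Fin n) (Fin n) F)
    (hreg : Matrix.charpoly β = minpoly F β)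
    (hg : IsUnit g) (hsymm : gᵀ = g) (hgβ : βᵀ * g = g * β)
    (hfix : ∀ X ∈ Algebra.adjoin F {β}, g⁻¹ * Xᵀ * g = X) :
    (∀ X Y : Matrix (Fin n) (Fin n) F,
      Matrix.trace (X * Y * β) =
        Matrix.trace ((g⁻¹ * Yᵀ * g) * (g⁻¹ * Xᵀ * g) * β)) ∧
    (∀ X Y : Matrix (Fin n) (Fin n) F, g⁻¹ * Xᵀ * g = X → g⁻¹ * Yᵀ * g = Y →
      Matrix.trace ((X * Y - Y * X) * β) = 0) ∧
    (∀ X Y : Matrix (Fin n) (Fin n) F, g⁻¹ * Xᵀ * g = -X → g⁻¹ * Yᵀ * g = -Y →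
      Matrix.trace ((X * Y - Y * X) * β) = 0) ∧
    (∀ X : Matrix (Fin n) (Fin n) F, ∃ P Q : Matrix (Fin n) (Fin n) F,
      g⁻¹ * Pᵀ * g = -P ∧ g⁻¹ * Qᵀ * g = Q ∧ X = P + Q) ∧
    (∀ X : Matrix (Fin n) (Fin n) F,
      g⁻¹ * Xᵀ * g = X → g⁻¹ * Xᵀ * g = -X → X = 0) := by
  have hdet : IsUnit g.det := (Matrix.isUnit_iff_isUnit_det g).mp hg
  have hgi : g * g⁻¹ = 1 := Matrix.mul_nonsing_inv g hdet
  have hig : g⁻¹ * g = 1 := Matrix.nonsing_inv_mul g hdet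
  have h2' : (2 : F) ≠ 0 := by
    intro h
    exact Ring.two_ne_zero h2 h
  have cancel1 : ∀ M : Matrix (Fin n) (Fin n) F, g * (g⁻¹ * M) = M := fun M => by
    rw [← Matrix.mul_assoc, hgi, Matrix.one_mul]
  -- main trace identity
  have key : ∀ X Y : Matrix (Fin n) (Fin n) F,
      Matrix.trace (X * Y * β) =
        Matrix.trace ((g⁻¹ * Yᵀ * g) * (g⁻¹ * Xᵀ * g) * β) := by
    intro X Y
    have e1 : (g⁻¹ * Yᵀ * g) * (g⁻¹ * Xᵀ * g) * β
        = g⁻¹ * (Yᵀ * (Xᵀ * (βᵀ * g))) := by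
      simp only [Matrix.mul_assoc]
      rw [cancel1, hgβ]
    rw [e1, Matrix.trace_mul_comm g⁻¹ (Yᵀ * (Xᵀ * (βᵀ * g)))]
    have e2 : Yᵀ * (Xᵀ * (βᵀ * g)) * g⁻¹ = ((β * X) * Y)ᵀ := by
      simp only [Matrix.mul_assoc, Matrix.transpose_mul]
      rw [hgi, Matrix.mul_one]
    rw [e2, Matrix.trace_transpose]
    conv_rhs => rw [Matrix.mul_assoc, Matrix.trace_mul_comm]
  refine ⟨key, ?_, ?_, ?_, ?_⟩
  · intro X Y hX hY
    have := key X Y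
    rw [hX, hY] at this
    rw [Matrix.sub_mul, Matrix.trace_sub, this, Matrix.trace_mul_comm (Y * X) β,
      ← Matrix.mul_assoc, Matrix.trace_mul_comm (β * Y) X, ← Matrix.mul_assoc,
      Matrix.trace_mul_comm (X * β) Y]
    simp [Matrix.mul_assoc, Matrix.trace_mul_comm β (Y * (X * β))]
  · intro X Y hX hY
    have := key X Y
    rw [hX, hY] at this
    rw [Matrix.neg_mul, Matrix.mul_neg, neg_neg] at this
    rw [Matrix.sub_mul, Matrix.trace_sub, this, Matrix.trace_mul_comm (Y * X) β,
      ← Matrix.mul_assoc, Matrix.trace_mul_comm (β * Y) X, ← Matrix.mul_assoc,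
      Matrix.trace_mul_comm (X * β) Y]
    simp [Matrix.mul_assoc, Matrix.trace_mul_comm β (Y * (X * β))]
  · intro X
    have hinv : ∀ M : Matrix (Fin n) (Fin n) F,
        g⁻¹ * (g⁻¹ * Mᵀ * g)ᵀ * g = M := by
      intro M
      rw [Matrix.transpose_mul, Matrix.transpose_mul, Matrix.transpose_nonsing_inv,
        hsymm, Matrix.transpose_transpose]
      simp only [Matrix.mul_assoc]
      rw [hig, Matrix.mul_one, ← Matrix.mul_assoc, hig, Matrix.one_mul]
    set σ : Matrix (Fin n) (Fin n) F → Matrix (Fin n) (Fin n) F :=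
      fun M => g⁻¹ * Mᵀ * g with hσ
    have σσ : ∀ M : Matrix (Fin n) (Fin n) F, σ (σ M) = M := hinv
    have σsub : ∀ A B, σ (A - B) = σ A - σ B := by
      intro A B
      simp [hσ, Matrix.transpose_sub, Matrix.mul_sub, Matrix.sub_mul]
    have σadd : ∀ A B, σ (A + B) = σ A + σ B := by
      intro A B
      simp [hσ, Matrix.transpose_add, Matrix.mul_add, Matrix.add_mul]
    have σsmul : ∀ (c : F) (A : Matrix (Fin n) (Fin n) F), σ (c • A) = c • σ A := by
      intro c A
      simp [hσ, Matrix.transpose_smul, Matrix.mul_smul, Matrix.smul_mul]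
    refine ⟨(2 : F)⁻¹ • (X - σ X), (2 : F)⁻¹ • (X + σ X), ?_, ?_, ?_⟩
    · show σ ((2 : F)⁻¹ • (X - σ X)) = _
      rw [σsmul, σsub, σσ X, ← smul_neg]
      congr 1
      abel
    · show σ ((2 : F)⁻¹ • (X + σ X)) = _
      rw [σsmul, σadd, σσ X]
      congr 1
      abel
    · rw [← smul_add, show (X - σ X) + (X + σ X) = (2 : F) • X by
        rw [two_smul]; abel, smul_smul, inv_mul_cancel₀ h2', one_smul]
  · intro X h1 h2''
    have : X = -X := h1.symm.trans h2''
    have h2X : X + X = 0 := by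
      nth_rewrite 1 [this]; abel
    have : (2 : F) • X = 0 := by
      rw [two_smul]; exact h2X
    have := congrArg (fun M => (2 : F)⁻¹ • M) this
    simpa [smul_smul, inv_mul_cancel₀ h2'] using this
end
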